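/- arXiv:math/0111077 — 3 statements merged into one kernel-verified Lean document; each statement's English description precedes it below -/
import Mathlib

section
/- Let q, T, ν, κ be as in the context. There is a constant C > 0 such that for all φ, φ' with 0 < |φ − φ'| ≤ π the 'cosine of the angle between the chord and the normal', c(φ, φ') := ⟨q(φ) − q(φ'), ν(φ)⟩ / ‖q(φ) − q(φ')‖, satisfies |c(φ, φ') + (1/2)·κ(φ)·|φ' − φ|| ≤ C·(φ' − φ)². In particular c(φ, φ') extends continuously across the diagonal φ = φ' with value 0 there. -/
open scoped RealInnerProductSpace

noncomputable section

section Aux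

variable {E : Type*} [NormedAddCommGroup E] [NormedSpace ℝ E]

private theorem mvt_seg' {f f' : ℝ → E} {C : ℝ} (a b : ℝ)
    (hf : ∀ x, HasDerivAt f (f' x) x)
    (hC : ∀ x ∈ Set.Icc (min a b) (max a b), ‖f' x‖ ≤ C) :
    ‖f b - f a‖ ≤ C * |b - a| := by
  have := Convex.norm_image_sub_le_of_norm_hasDerivWithin_le
    (f := f) (f' := f') (s := Set.Icc (min a b) (max a b)) (C := C)
    (fun x _ => (hf x).hasDerivWithinAt) hC (convex_Icc _ _)
    ⟨min_le_left a b, le_max_left a b⟩ ⟨min_le_right a b, le_max_right a b⟩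
  simpa [Real.norm_eq_abs] using this

private theorem abs_sub_le_seg' {a b x : ℝ} (hx : x ∈ Set.Icc (min a b) (max a b)) :
    |x - a| ≤ |b - a| := by
  rcases hx with ⟨h3, h4⟩
  rw [abs_sub_le_iff]
  constructor <;> cases' le_total a b with hab hab <;>
    simp [min_def, max_def, hab] at h3 h4 ⊢ <;>
    nlinarith [abs_nonneg (b-a), le_abs_self (b-a), neg_abs_le (b-a)]

private theorem taylor1' {f : ℝ → E} {M : ℝ}
    (hf : ∀ x, HasDerivAt f (deriv f x) x)
    (hf' : ∀ x, HasDerivAt (deriv f) (deriv (deriv f) x) x)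
    (hM : 0 ≤ M) (hMb : ∀ t, ‖deriv (deriv f) t‖ ≤ M) (a b : ℝ) :
    ‖f b - f a - (b - a) • deriv f a‖ ≤ M * (b - a)^2 := by
  set v := deriv f a
  have hg : ∀ x, HasDerivAt (fun t => f t - t • v) (deriv f x - v) x := by
    intro x
    exact ((hf x).sub ((hasDerivAt_id x).smul_const v)).congr_deriv (by simp)
  have key : ‖(f b - b • v) - (f a - a • v)‖ ≤ (M * |b - a|) * |b - a| := by
    apply mvt_seg' a b hg
    intro x hx
    have h1 : ‖deriv f x - deriv f a‖ ≤ M * |x - a| := by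
      apply mvt_seg' a x hf'
      intro y _
      exact hMb y
    have h2 : |x - a| ≤ |b - a| := abs_sub_le_seg' hx
    calc ‖deriv f x - v‖ ≤ M * |x - a| := h1
      _ ≤ M * |b - a| := by nlinarith
  have heq : (f b - b • v) - (f a - a • v) = f b - f a - (b - a) • v := by
    rw [sub_smul]; abel
  rw [heq] at key
  calc ‖f b - f a - (b - a) • v‖ ≤ (M * |b - a|) * |b - a| := key
    _ = M * (b-a)^2 := by
        rw [mul_assoc, ← abs_mul, abs_of_nonneg (mul_self_nonneg (b-a))]; ring

private theorem taylor2' {f : ℝ → E} {M : ℝ}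
    (hf : ∀ x, HasDerivAt f (deriv f x) x)
    (hf' : ∀ x, HasDerivAt (deriv f) (deriv (deriv f) x) x)
    (hf'' : ∀ x, HasDerivAt (deriv (deriv f)) (deriv (deriv (deriv f)) x) x)
    (hM : 0 ≤ M) (hMb : ∀ t, ‖deriv (deriv (deriv f)) t‖ ≤ M) (a b : ℝ) :
    ‖f b - f a - (b - a) • deriv f a - ((b - a)^2/2) • deriv (deriv f) a‖
      ≤ M * (b - a)^2 * |b - a| := by
  set v₁ := deriv f a
  set v₂ := deriv (deriv f) a
  have hg : ∀ x, HasDerivAt (fun t => f t - t • v₁ - ((t - a)^2/2) • v₂)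
      (deriv f x - v₁ - (x - a) • v₂) x := by
    intro x
    have h1 : HasDerivAt (fun t : ℝ => ((t - a)^2/2)) (x - a) x := by
      have := ((((hasDerivAt_id x).sub_const a).pow 2).div_const 2)
      simpa using this
    exact (((hf x).sub ((hasDerivAt_id x).smul_const v₁)).sub (h1.smul_const v₂)).congr_deriv (by simp)
  have key : ‖(f b - b • v₁ - ((b - a)^2/2) • v₂) - (f a - a • v₁ - ((a - a)^2/2) • v₂)‖
      ≤ (M * (b - a)^2) * |b - a| := by
    apply mvt_seg' a b hg
    intro x hx
    have h1 := taylor1' hf' hf'' hM hMb a x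
    have h2 : |x - a| ≤ |b - a| := abs_sub_le_seg' hx
    have h3 : (x - a)^2 ≤ (b - a)^2 := by
      rw [← sq_abs (x-a), ← sq_abs (b-a)]
      exact pow_le_pow_left₀ (abs_nonneg _) h2 2
    calc ‖deriv f x - v₁ - (x - a) • v₂‖ ≤ M * (x - a)^2 := h1
      _ ≤ M * (b - a)^2 := by nlinarith
  have heq : (f b - b • v₁ - ((b - a)^2/2) • v₂) - (f a - a • v₁ - ((a - a)^2/2) • v₂)
      = f b - f a - (b - a) • v₁ - ((b - a)^2/2) • v₂ := by
    rw [sub_smul]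
    simp
    abel
  rw [heq] at key
  linarith [key]

private theorem periodic_deriv'' {f : ℝ → E} {c : ℝ} (h : Function.Periodic f c) :
    Function.Periodic (deriv f) c := by
  intro x
  rw [← deriv_comp_add_const]
  congr 1
  funext y
  exact h y

private theorem bounded_of_periodic' {f : ℝ → E} {c : ℝ} (hf : Continuous f)
    (h : Function.Periodic f c) (hc : 0 < c) :
    ∃ M, 0 ≤ M ∧ ∀ x, ‖f x‖ ≤ M := by
  obtain ⟨M, hM⟩ := (isCompact_Icc (a := (0:ℝ)) (b := c)).exists_bound_of_continuousOn
    hf.continuousOn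
  refine ⟨max M 0, le_max_right _ _, fun x => ?_⟩
  obtain ⟨y, hy, hxy⟩ := h.exists_mem_Ico₀ hc x
  rw [hxy]
  exact le_trans (hM y ⟨hy.1, hy.2.le⟩) (le_max_left _ _)

private theorem inj_aux' {f : ℝ → E} (hper : Function.Periodic f (2 * Real.pi))
    (hinj : Set.InjOn f (Set.Ico 0 (2 * Real.pi))) :
    ∀ a b : ℝ, |a - b| ≤ Real.pi → f a = f b → a = b := by
  have hpi := Real.pi_pos
  have hc : (0:ℝ) < 2 * Real.pi := by linarith
  intro a b hab hfab
  set ka := ⌊a / (2 * Real.pi)⌋ with hka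
  set kb := ⌊b / (2 * Real.pi)⌋ with hkb
  have ha1 : a - ka * (2 * Real.pi) ∈ Set.Ico 0 (2 * Real.pi) :=
    ⟨Int.sub_floor_div_mul_nonneg a hc, Int.sub_floor_div_mul_lt a hc⟩
  have hb1 : b - kb * (2 * Real.pi) ∈ Set.Ico 0 (2 * Real.pi) :=
    ⟨Int.sub_floor_div_mul_nonneg b hc, Int.sub_floor_div_mul_lt b hc⟩
  have ha2 : f (a - ka * (2 * Real.pi)) = f a := hper.sub_int_mul_eq ka
  have hb2 : f (b - kb * (2 * Real.pi)) = f b := hper.sub_int_mul_eq kb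
  have heq : a - ka * (2 * Real.pi) = b - kb * (2 * Real.pi) :=
    hinj ha1 hb1 (by rw [ha2, hb2, hfab])
  by_cases hk : ka = kb
  · rw [hk] at heq; linarith [heq]
  · exfalso
    have h1 : a - b = ((ka - kb : ℤ) : ℝ) * (2 * Real.pi) := by
      push_cast
      linarith [heq]
    have h2 : (1:ℝ) ≤ |((ka - kb : ℤ) : ℝ)| := by
      rw [← Int.cast_abs]
      exact_mod_cast Int.one_le_abs (sub_ne_zero.mpr hk)
    have h3 : |a - b| = |((ka - kb : ℤ) : ℝ)| * (2 * Real.pi) := by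
      rw [h1, abs_mul, abs_of_pos hc]
    nlinarith

end Aux

set_option maxHeartbeats 1000000 in
/-- The cosine of the angle between the chord `q(φ) - q(φ')` and the normal `ν(φ)`
satisfies `c(φ,φ') = -(1/2) κ(φ) |φ'-φ| + O((φ'-φ)²)`; in particular it extends
continuously across the diagonal with value `0` there. -/
theorem stmt_1
    (q T ν : ℝ → EuclideanSpace ℝ (Fin 2)) (κ : ℝ → ℝ) (c : ℝ → ℝ → ℝ)
    (hq : ContDiff ℝ (⊤ : ℕ∞) q)
    (hper : Function.Periodic q (2 * Real.pi))
    (hspeed : ∀ φ, ‖deriv q φ‖ = 1)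
    (hinj : Set.InjOn q (Set.Ico 0 (2 * Real.pi)))
    (hT : ∀ φ, T φ = deriv q φ)
    (hν0 : ∀ φ, ν φ 0 = -(deriv q φ 1))
    (hν1 : ∀ φ, ν φ 1 = deriv q φ 0)
    (hκ : ∀ φ, κ φ = ⟪deriv (deriv q) φ, ν φ⟫)
    (hc : ∀ φ φ', c φ φ' = ⟪q φ - q φ', ν φ⟫ / ‖q φ - q φ'‖) :
    (∃ C > 0, ∀ φ φ' : ℝ, 0 < |φ - φ'| → |φ - φ'| ≤ Real.pi →
        |c φ φ' + (1/2) * κ φ * abs (φ' - φ)| ≤ C * (φ' - φ)^2) ∧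
    (∀ φ₀ : ℝ, Filter.Tendsto (fun p : ℝ × ℝ => c p.1 p.2)
        (nhdsWithin (φ₀, φ₀) {p : ℝ × ℝ | p.1 ≠ p.2}) (nhds 0)) := by
  have hpi := Real.pi_pos
  have h2pi : (0:ℝ) < 2 * Real.pi := by linarith
  have hq1 := contDiff_infty_iff_deriv.mp (hq.of_le (by simp))
  have hq2 := contDiff_infty_iff_deriv.mp hq1.2
  have hq3 := contDiff_infty_iff_deriv.mp hq2.2
  have hd0 : ∀ x, HasDerivAt q (deriv q x) x := fun x => (hq1.1 x).hasDerivAt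
  have hd1 : ∀ x, HasDerivAt (deriv q) (deriv (deriv q) x) x := fun x => (hq2.1 x).hasDerivAt
  have hd2 : ∀ x, HasDerivAt (deriv (deriv q)) (deriv (deriv (deriv q)) x) x :=
    fun x => (hq3.1 x).hasDerivAt
  have hper2 : Function.Periodic (deriv (deriv q)) (2 * Real.pi) :=
    periodic_deriv'' (periodic_deriv'' hper)
  have hper3 : Function.Periodic (deriv (deriv (deriv q))) (2 * Real.pi) :=
    periodic_deriv'' hper2
  obtain ⟨M2, hM2nn, hM2⟩ := bounded_of_periodic' hq2.2.continuous hper2 h2pi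
  obtain ⟨M3, hM3nn, hM3⟩ := bounded_of_periodic' hq3.2.continuous hper3 h2pi
  have T1 := taylor1' hd0 hd1 hM2nn hM2
  have T2 := taylor2' hd0 hd1 hd2 hM3nn hM3
  have hinner : ∀ x y : EuclideanSpace ℝ (Fin 2), ⟪x, y⟫ = x 0 * y 0 + x 1 * y 1 :=
    fun x y => by simp [PiLp.inner_apply, Fin.sum_univ_two]; ring
  have hνn : ∀ φ, ‖ν φ‖ = 1 := by
    intro φ
    have h1 : ‖ν φ‖^2 = ‖deriv q φ‖^2 := by
      rw [← real_inner_self_eq_norm_sq, ← real_inner_self_eq_norm_sq, hinner, hinner,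
        hν0, hν1]
      ring
    nlinarith [norm_nonneg (ν φ), hspeed φ]
  have hTν : ∀ φ, ⟪deriv q φ, ν φ⟫ = 0 := fun φ => by rw [hinner, hν0, hν1]; ring
  have hκb : ∀ φ, |κ φ| ≤ M2 := by
    intro φ
    rw [hκ]
    calc |⟪deriv (deriv q) φ, ν φ⟫| ≤ ‖deriv (deriv q) φ‖ * ‖ν φ‖ := abs_real_inner_le_norm _ _
      _ ≤ M2 := by rw [hνn]; simpa using hM2 φ
  have hinj2 := inj_aux' hper hinj
  -- the chord lower bound
  obtain ⟨δ, hδ, hchord⟩ : ∃ δ > 0, ∀ φ φ' : ℝ, 0 < |φ' - φ| → |φ' - φ| ≤ Real.pi →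
      δ * |φ' - φ| ≤ ‖q φ - q φ'‖ := by
    set ε := min Real.pi (1/(2*(M2+1))) with hε
    have hεpos : 0 < ε := lt_min hpi (by positivity)
    have hεπ : ε ≤ Real.pi := min_le_left _ _
    have hclosed : IsClosed {p : ℝ × ℝ | ε ≤ |p.1 - p.2| ∧ |p.1 - p.2| ≤ Real.pi} :=
      IsClosed.inter (isClosed_le continuous_const (continuous_fst.sub continuous_snd).abs)
        (isClosed_le (continuous_fst.sub continuous_snd).abs continuous_const)
    set S := (Set.Icc (0:ℝ) (2*Real.pi) ×ˢ Set.Icc (-Real.pi) (3*Real.pi)) ∩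
      {p : ℝ × ℝ | ε ≤ |p.1 - p.2| ∧ |p.1 - p.2| ≤ Real.pi} with hSdef
    have hScompact : IsCompact S := (isCompact_Icc.prod isCompact_Icc).inter_right hclosed
    have hSne : S.Nonempty := by
      refine ⟨(0, ε), ?_⟩
      simp only [hSdef, Set.mem_inter_iff, Set.mem_prod, Set.mem_Icc, Set.mem_setOf_eq]
      rw [show (0:ℝ) - ε = -ε by ring, abs_neg, abs_of_pos hεpos]
      exact ⟨⟨⟨le_refl 0, by linarith⟩, by linarith, by linarith⟩, le_refl ε, hεπ⟩
    have hF : Continuous (fun p : ℝ × ℝ => ‖q p.1 - q p.2‖) :=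
      ((hq.continuous.comp continuous_fst).sub (hq.continuous.comp continuous_snd)).norm
    obtain ⟨p₀, hp₀S, hp₀min⟩ := hScompact.exists_isMinOn hSne hF.continuousOn
    set m := ‖q p₀.1 - q p₀.2‖ with hm_def
    have hm : 0 < m := by
      rw [hm_def, norm_pos_iff, sub_ne_zero]
      intro hcon
      have h1 := hinj2 p₀.1 p₀.2 hp₀S.2.2 hcon
      have h2 := hp₀S.2.1
      rw [h1, sub_self, abs_zero] at h2
      linarith
    refine ⟨min (1/2) (m / Real.pi), lt_min (by norm_num) (by positivity), ?_⟩
    intro φ φ' hne hle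
    by_cases hcase : |φ' - φ| ≤ ε
    · have hT1 := T1 φ φ'
      have hnorm : ‖(φ' - φ) • deriv q φ‖ = |φ' - φ| := by
        rw [norm_smul, hspeed, Real.norm_eq_abs, mul_one]
      have h5 : ‖q φ - q φ'‖ = ‖q φ' - q φ‖ := norm_sub_rev _ _
      have h6 : |φ' - φ| ≤ ‖q φ' - q φ‖ + M2 * (φ' - φ)^2 := by
        calc |φ' - φ| = ‖(φ' - φ) • deriv q φ‖ := hnorm.symm
          _ = ‖(q φ' - q φ) - (q φ' - q φ - (φ' - φ) • deriv q φ)‖ := by congr 1; abel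
          _ ≤ ‖q φ' - q φ‖ + ‖q φ' - q φ - (φ' - φ) • deriv q φ‖ := norm_sub_le _ _
          _ ≤ _ := by linarith
      have h8 : (φ'-φ)^2 = |φ'-φ| * |φ'-φ| := by
        rw [← abs_mul, abs_of_nonneg (mul_self_nonneg _)]; ring
      have h10 : M2 * ε ≤ 1/2 := by
        have hεle : ε ≤ 1/(2*(M2+1)) := min_le_right _ _
        have : M2 * ε ≤ M2 * (1/(2*(M2+1))) := by nlinarith
        calc M2 * ε ≤ M2 * (1/(2*(M2+1))) := this
          _ ≤ 1/2 := by
            rw [mul_one_div, div_le_div_iff₀ (by positivity) (by norm_num)]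
            nlinarith
      have h7 : M2 * (φ' - φ)^2 ≤ (1/2) * |φ' - φ| := by nlinarith [abs_nonneg (φ'-φ)]
      have h11 : (1/2) * |φ'-φ| ≤ ‖q φ' - q φ‖ := by linarith
      rw [h5]
      have hmin2 : min (1/2) (m / Real.pi) ≤ 1/2 := min_le_left _ _
      nlinarith [abs_nonneg (φ'-φ)]
    · push_neg at hcase
      set k := ⌊φ / (2*Real.pi)⌋ with hk_def
      have hmem : (φ - k*(2*Real.pi), φ' - k*(2*Real.pi)) ∈ S := by
        refine ⟨⟨⟨Int.sub_floor_div_mul_nonneg φ h2pi, (Int.sub_floor_div_mul_lt φ h2pi).le⟩,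
          ?_, ?_⟩, ?_⟩
        · have h1 := Int.sub_floor_div_mul_nonneg φ h2pi
          have h2 := neg_abs_le (φ' - φ)
          simp only
          linarith
        · have h1 := Int.sub_floor_div_mul_lt φ h2pi
          have h2 := le_abs_self (φ' - φ)
          simp only
          linarith
        · constructor <;>
          · simp only [Set.mem_setOf_eq]
            rw [show (φ - k*(2*Real.pi)) - (φ' - k*(2*Real.pi)) = -(φ' - φ) by ring, abs_neg]
            first | exact hcase.le | exact hle
      have hqa : q (φ - k*(2*Real.pi)) = q φ := hper.sub_int_mul_eq k
      have hqb : q (φ' - k*(2*Real.pi)) = q φ' := hper.sub_int_mul_eq k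
      have hminv : m ≤ ‖q φ - q φ'‖ := by
        have := isMinOn_iff.mp hp₀min _ hmem
        simpa [hqa, hqb] using this
      have hmπ : 0 ≤ m / Real.pi := by positivity
      calc min (1/2) (m / Real.pi) * |φ' - φ| ≤ (m / Real.pi) * |φ' - φ| := by
            nlinarith [min_le_right (1/2 : ℝ) (m / Real.pi), abs_nonneg (φ' - φ)]
        _ ≤ (m / Real.pi) * Real.pi := by nlinarith
        _ = m := div_mul_cancel₀ m (ne_of_gt hpi)
        _ ≤ ‖q φ - q φ'‖ := hminv
  -- main quantitative estimate
  set C := (M2^2/2 + M3)/δ + 1 with hC_def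
  have hCpos : 0 < C := by positivity
  have hCδ : C * δ = M2^2/2 + M3 + δ := by rw [hC_def]; field_simp
  clear_value C
  have main : ∀ φ φ' : ℝ, 0 < |φ - φ'| → |φ - φ'| ≤ Real.pi →
      |c φ φ' + (1/2) * κ φ * abs (φ' - φ)| ≤ C * (φ' - φ)^2 := by
    intro φ φ' hpos hle
    have habs : |φ' - φ| = |φ - φ'| := abs_sub_comm φ' φ
    have hd := hchord φ φ' (habs ▸ hpos) (habs ▸ hle)
    have hdpos : 0 < ‖q φ - q φ'‖ := by
      have : 0 < δ * |φ' - φ| := mul_pos hδ (habs ▸ hpos)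
      linarith
    set d := ‖q φ - q φ'‖ with hd_def
    set R := q φ' - q φ - (φ' - φ) • deriv q φ - ((φ' - φ)^2/2) • deriv (deriv q) φ with hR_def
    have hR3 : ‖R‖ ≤ M3 * (φ' - φ)^2 * |φ' - φ| := T2 φ φ'
    have hΔ : q φ - q φ' = -((φ' - φ) • deriv q φ) - (((φ' - φ)^2/2) • deriv (deriv q) φ) - R := by
      rw [hR_def]; abel
    have hip : ⟪q φ - q φ', ν φ⟫ = -((φ' - φ)^2/2 * κ φ) - ⟪R, ν φ⟫ := by
      rw [hΔ, inner_sub_left, inner_sub_left, inner_neg_left, real_inner_smul_left,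
        real_inner_smul_left, hTν, hκ]
      ring
    have hipb : |⟪R, ν φ⟫| ≤ M3 * (φ' - φ)^2 * |φ' - φ| := by
      calc |⟪R, ν φ⟫| ≤ ‖R‖ * ‖ν φ‖ := abs_real_inner_le_norm _ _
        _ = ‖R‖ := by rw [hνn, mul_one]
        _ ≤ _ := hR3
    have hdh : abs (d - abs (φ' - φ)) ≤ M2 * (φ' - φ)^2 := by
      have h1 : ‖-((φ' - φ) • deriv q φ)‖ = |φ' - φ| := by
        rw [norm_neg, norm_smul, hspeed, Real.norm_eq_abs, mul_one]
      calc abs (d - abs (φ' - φ)) = |‖q φ - q φ'‖ - ‖-((φ' - φ) • deriv q φ)‖| := by rw [h1, hd_def]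
        _ ≤ ‖(q φ - q φ') - (-((φ' - φ) • deriv q φ))‖ := abs_norm_sub_norm_le _ _
        _ = ‖q φ' - q φ - (φ' - φ) • deriv q φ‖ := by rw [← norm_neg]; congr 1; abel
        _ ≤ M2 * (φ' - φ)^2 := T1 φ φ'
    rw [hc]
    have hrw : ⟪q φ - q φ', ν φ⟫ / d + 1/2 * κ φ * |φ' - φ|
        = (⟪q φ - q φ', ν φ⟫ + 1/2 * κ φ * |φ' - φ| * d) / d :=
      div_add' _ _ _ (ne_of_gt hdpos)
    rw [hrw, abs_div, abs_of_pos hdpos, div_le_iff₀ hdpos, hip]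
    have hhsq : |φ' - φ|^2 = (φ' - φ)^2 := sq_abs _
    have hkey : -((φ' - φ)^2/2 * κ φ) - ⟪R, ν φ⟫ + 1/2 * κ φ * |φ' - φ| * d
        = 1/2 * κ φ * |φ' - φ| * (d - |φ' - φ|) - ⟪R, ν φ⟫ := by
      rw [← hhsq]; ring
    rw [hkey]
    have hb1 : |1/2 * κ φ * |φ' - φ| * (d - |φ' - φ|) - ⟪R, ν φ⟫|
        ≤ (M2^2/2 + M3) * ((φ' - φ)^2 * |φ' - φ|) := by
      have e0 : |1/2 * κ φ * |φ' - φ| * (d - |φ' - φ|) - ⟪R, ν φ⟫|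
          ≤ abs (1/2 * κ φ * abs (φ' - φ) * (d - abs (φ' - φ))) + |⟪R, ν φ⟫| := by
        rw [sub_eq_add_neg]
        exact le_trans (abs_add_le _ _) (by rw [abs_neg])
      have e1 : abs (1/2 * κ φ * abs (φ' - φ) * (d - abs (φ' - φ)))
          = 1/2 * |κ φ| * |φ' - φ| * abs (d - abs (φ' - φ)) := by
        rw [abs_mul, abs_mul, abs_mul, abs_abs]
        norm_num
      have e2 : 1/2 * |κ φ| * |φ' - φ| * abs (d - abs (φ' - φ))
          ≤ 1/2 * M2 * |φ' - φ| * (M2 * (φ' - φ)^2) := by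
        have A : |κ φ| * abs (d - abs (φ' - φ)) ≤ M2 * (M2 * (φ' - φ)^2) :=
          mul_le_mul (hκb φ) hdh (abs_nonneg _) hM2nn
        nlinarith [mul_le_mul_of_nonneg_left A (abs_nonneg (φ' - φ))]
      nlinarith [hipb, abs_nonneg (φ' - φ), sq_nonneg (φ' - φ)]
    have e3 : C * (φ' - φ)^2 * (δ * |φ' - φ|) ≤ C * (φ' - φ)^2 * d :=
      mul_le_mul_of_nonneg_left hd (by positivity)
    have e4 : C * (φ' - φ)^2 * (δ * |φ' - φ|)
        = (M2^2/2 + M3 + δ) * ((φ' - φ)^2 * |φ' - φ|) := by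
      calc C * (φ' - φ)^2 * (δ * |φ' - φ|) = (C * δ) * ((φ' - φ)^2 * |φ' - φ|) := by ring
        _ = _ := by rw [hCδ]
    have e5 : 0 ≤ δ * ((φ' - φ)^2 * |φ' - φ|) := by positivity
    nlinarith [hb1, e3, e4, e5]
  refine ⟨⟨C, hCpos, main⟩, ?_⟩
  intro φ₀
  apply squeeze_zero_norm' (a := fun p : ℝ × ℝ => M2/2 * |p.2 - p.1| + C * (p.2 - p.1)^2)
  · have hU : {p : ℝ × ℝ | |p.1 - p.2| < Real.pi} ∈
        nhdsWithin (φ₀, φ₀) {p : ℝ × ℝ | p.1 ≠ p.2} := by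
      apply mem_nhdsWithin_of_mem_nhds
      apply IsOpen.mem_nhds
      · exact isOpen_lt (continuous_fst.sub continuous_snd).abs continuous_const
      · simp [hpi]
    filter_upwards [hU, self_mem_nhdsWithin] with p hp1 hp2
    have hppos : 0 < |p.1 - p.2| := abs_pos.mpr (sub_ne_zero.mpr hp2)
    have hmain := main p.1 p.2 hppos (le_of_lt hp1)
    rw [Real.norm_eq_abs]
    have h1 : |c p.1 p.2| ≤ abs (c p.1 p.2 + 1/2 * κ p.1 * abs (p.2 - p.1)) + abs (1/2 * κ p.1 * abs (p.2 - p.1)) := by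
      calc |c p.1 p.2| = |(c p.1 p.2 + 1/2 * κ p.1 * |p.2 - p.1|) + (-(1/2 * κ p.1 * |p.2 - p.1|))| := by
            congr 1; ring
        _ ≤ _ := le_trans (abs_add_le _ _) (by rw [abs_neg])
    have h2 : abs (1/2 * κ p.1 * abs (p.2 - p.1)) ≤ M2/2 * |p.2 - p.1| := by
      rw [abs_mul, abs_mul, abs_abs, show |(1:ℝ)/2| = 1/2 by norm_num]
      nlinarith [mul_le_mul_of_nonneg_right (hκb p.1) (abs_nonneg (p.2 - p.1))]
    linarith [hmain, h1, h2]
  · have hg : Continuous (fun p : ℝ × ℝ => M2/2 * |p.2 - p.1| + C * (p.2 - p.1)^2) := by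
      apply Continuous.add
      · exact continuous_const.mul (continuous_snd.sub continuous_fst).abs
      · exact continuous_const.mul ((continuous_snd.sub continuous_fst).pow 2)
    have := hg.tendsto (φ₀, φ₀)
    simp only [sub_self, abs_zero, mul_zero, ne_eq, zero_pow, add_zero] at this
    simpa using this.mono_left nhdsWithin_le_nhds
end
end

section
/- Let q be as in the context and define the unit chord direction e(φ₁, φ₂) = (q(φ₁) − q(φ₂))/‖q(φ₁) − q(φ₂)‖ for φ₁ ≠ φ₂ (mod 2π). Then for every pair of nonnegative integers (m, n) there is a constant C_{m,n} such that for all (φ₁, φ₂) with 0 < |φ₁ − φ₂| ≤ π one has ‖∂_{φ₁}^m ∂_{φ₂}^n e(φ₁, φ₂)‖ ≤ C_{m,n} · |φ₁ − φ₂|^{−(m+n)}. -/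
open scoped RealInnerProductSpace

noncomputable section

namespace Stmt5Aux

open Filter Set Metric Function
open scoped ContDiff

variable {F : Type*} [NormedAddCommGroup F] [NormedSpace ℝ F]

lemma coe_le_infty (i : ℕ) : (i : WithTop ℕ∞) ≤ ∞ := by exact_mod_cast le_top

lemma one_le_infty : (1 : WithTop ℕ∞) ≤ ∞ := by exact_mod_cast le_top

/-- Directional derivative operator in direction `v`. -/
def Dop (v : ℝ × ℝ) (f : ℝ × ℝ → F) : ℝ × ℝ → F := fun p => fderiv ℝ f p v

lemma Dop_contDiff {f : ℝ × ℝ → F} (hf : ContDiff ℝ ∞ f) (v : ℝ × ℝ) :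
    ContDiff ℝ ∞ (Dop v f) := by
  have h1 : ContDiff ℝ ∞ (fderiv ℝ f) := hf.fderiv_right le_rfl
  exact h1.clm_apply contDiff_const

lemma Dop_iterate_contDiff {f : ℝ × ℝ → F} (hf : ContDiff ℝ ∞ f) (v : ℝ × ℝ) (n : ℕ) :
    ContDiff ℝ ∞ ((Dop v)^[n] f) := by
  induction n generalizing f with
  | zero => exact hf
  | succ n IH =>
    rw [Function.iterate_succ_apply]
    exact IH (Dop_contDiff hf v)

lemma deriv_slice_snd {f : ℝ × ℝ → F} (hf : ContDiff ℝ ∞ f) (x b : ℝ) :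
    deriv (fun y => f (x, y)) b = Dop ((0 : ℝ), (1 : ℝ)) f (x, b) := by
  have hd : HasFDerivAt f (fderiv ℝ f (x, b)) (x, b) :=
    (hf.differentiable (by simp) (x, b)).hasFDerivAt
  have hl : HasDerivAt (fun y : ℝ => ((x, y) : ℝ × ℝ)) (((0 : ℝ), (1 : ℝ))) b :=
    (hasDerivAt_const b x).prodMk (hasDerivAt_id b)
  exact (hd.comp_hasDerivAt b hl).deriv

lemma deriv_slice_fst {f : ℝ × ℝ → F} (hf : ContDiff ℝ ∞ f) (a y : ℝ) :
    deriv (fun x => f (x, y)) a = Dop ((1 : ℝ), (0 : ℝ)) f (a, y) := by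
  have hd : HasFDerivAt f (fderiv ℝ f (a, y)) (a, y) :=
    (hf.differentiable (by simp) (a, y)).hasFDerivAt
  have hl : HasDerivAt (fun x : ℝ => ((x, y) : ℝ × ℝ)) (((1 : ℝ), (0 : ℝ))) a :=
    (hasDerivAt_id a).prodMk (hasDerivAt_const a y)
  exact (hd.comp_hasDerivAt a hl).deriv

lemma iteratedDeriv_slice_snd {f : ℝ × ℝ → F} (hf : ContDiff ℝ ∞ f) (n : ℕ) (x b : ℝ) :
    iteratedDeriv n (fun y => f (x, y)) b = (Dop ((0 : ℝ), (1 : ℝ)))^[n] f (x, b) := by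
  induction n generalizing f with
  | zero => simp [iteratedDeriv_zero]
  | succ n IH =>
    rw [iteratedDeriv_succ']
    have h1 : deriv (fun y => f (x, y)) = fun y => Dop ((0 : ℝ), (1 : ℝ)) f (x, y) :=
      funext fun y => deriv_slice_snd hf x y
    rw [h1, IH (Dop_contDiff hf _), Function.iterate_succ_apply]

lemma iteratedDeriv_slice_fst {f : ℝ × ℝ → F} (hf : ContDiff ℝ ∞ f) (m : ℕ) (a b : ℝ) :
    iteratedDeriv m (fun x => f (x, b)) a = (Dop ((1 : ℝ), (0 : ℝ)))^[m] f (a, b) := by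
  induction m generalizing f with
  | zero => simp [iteratedDeriv_zero]
  | succ m IH =>
    rw [iteratedDeriv_succ']
    have h1 : deriv (fun x => f (x, b)) = fun x => Dop ((1 : ℝ), (0 : ℝ)) f (x, b) :=
      funext fun x => deriv_slice_fst hf x b
    rw [h1, IH (Dop_contDiff hf _), Function.iterate_succ_apply]

lemma norm_iteratedFDeriv_Dop_le {f : ℝ × ℝ → F} (hf : ContDiff ℝ ∞ f) {v : ℝ × ℝ}
    (hv : ‖v‖ ≤ 1) (k : ℕ) (p : ℝ × ℝ) :
    ‖iteratedFDeriv ℝ k (Dop v f) p‖ ≤ ‖iteratedFDeriv ℝ (k + 1) f p‖ := by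
  set A : ((ℝ × ℝ) →L[ℝ] F) →L[ℝ] F := ContinuousLinearMap.apply ℝ F v with hA
  have hcomp : Dop v f = A ∘ (fderiv ℝ f) := rfl
  have hfd : ContDiff ℝ ∞ (fderiv ℝ f) := hf.fderiv_right (by simp)
  rw [hcomp, A.iteratedFDeriv_comp_left hfd.contDiffAt (coe_le_infty k)]
  have h1 : ‖A‖ ≤ 1 := by
    refine ContinuousLinearMap.opNorm_le_bound _ zero_le_one fun L => ?_
    have : ‖A L‖ = ‖L v‖ := rfl
    rw [this, one_mul]
    calc ‖L v‖ ≤ ‖L‖ * ‖v‖ := L.le_opNorm v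
    _ ≤ ‖L‖ * 1 := by
        exact mul_le_mul_of_nonneg_left hv (norm_nonneg L)
    _ = ‖L‖ := mul_one _
  calc ‖A.compContinuousMultilinearMap (iteratedFDeriv ℝ k (fderiv ℝ f) p)‖
      ≤ ‖A‖ * ‖iteratedFDeriv ℝ k (fderiv ℝ f) p‖ :=
        A.norm_compContinuousMultilinearMap_le _
    _ ≤ 1 * ‖iteratedFDeriv ℝ k (fderiv ℝ f) p‖ :=
        mul_le_mul_of_nonneg_right h1 (norm_nonneg _)
    _ = ‖iteratedFDeriv ℝ (k + 1) f p‖ := by rw [one_mul, norm_iteratedFDeriv_fderiv]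

lemma norm_Dop_iterate_le {v : ℝ × ℝ} (hv : ‖v‖ ≤ 1) :
    ∀ (m : ℕ) (f : ℝ × ℝ → F), ContDiff ℝ ∞ f → ∀ p,
      ‖(Dop v)^[m] f p‖ ≤ ‖iteratedFDeriv ℝ m f p‖ := by
  intro m
  induction m with
  | zero => intro f hf p; simp [norm_iteratedFDeriv_zero]
  | succ m IH =>
    intro f hf p
    rw [Function.iterate_succ_apply]
    calc ‖(Dop v)^[m] (Dop v f) p‖ ≤ ‖iteratedFDeriv ℝ m (Dop v f) p‖ :=
          IH (Dop v f) (Dop_contDiff hf v) p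
      _ ≤ ‖iteratedFDeriv ℝ (m + 1) f p‖ := norm_iteratedFDeriv_Dop_le hf hv m p

lemma norm_Dop_iterate2_le {v w : ℝ × ℝ} (hv : ‖v‖ ≤ 1) (hw : ‖w‖ ≤ 1) (m : ℕ) :
    ∀ (n : ℕ) (f : ℝ × ℝ → F), ContDiff ℝ ∞ f → ∀ p,
      ‖(Dop v)^[m] ((Dop w)^[n] f) p‖ ≤ ‖iteratedFDeriv ℝ (m + n) f p‖ := by
  intro n
  induction n with
  | zero => intro f hf p; simpa using norm_Dop_iterate_le hv m f hf p
  | succ n IH =>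
    intro f hf p
    rw [Function.iterate_succ_apply]
    calc ‖(Dop v)^[m] ((Dop w)^[n] (Dop w f)) p‖
        ≤ ‖iteratedFDeriv ℝ (m + n) (Dop w f) p‖ := IH (Dop w f) (Dop_contDiff hf w) p
      _ ≤ ‖iteratedFDeriv ℝ (m + n + 1) f p‖ := norm_iteratedFDeriv_Dop_le hf hw (m + n) p
      _ = ‖iteratedFDeriv ℝ (m + (n + 1)) f p‖ := by rw [add_assoc]

lemma key_bound {f : ℝ × ℝ → F} (hf : ContDiff ℝ ∞ f) (m n : ℕ) (a b : ℝ) :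
    ‖iteratedDeriv m (fun x => iteratedDeriv n (fun y => f (x, y)) b) a‖ ≤
      ‖iteratedFDeriv ℝ (m + n) f (a, b)‖ := by
  have h1 : (fun x => iteratedDeriv n (fun y => f (x, y)) b) =
      fun x => ((Dop ((0 : ℝ), (1 : ℝ)))^[n] f) (x, b) :=
    funext fun x => iteratedDeriv_slice_snd hf n x b
  rw [h1, iteratedDeriv_slice_fst (Dop_iterate_contDiff hf _ n) m a b]
  have hv : ‖(((1 : ℝ), (0 : ℝ)) : ℝ × ℝ)‖ ≤ 1 := by
    rw [Prod.norm_def]; simp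
  have hw : ‖(((0 : ℝ), (1 : ℝ)) : ℝ × ℝ)‖ ≤ 1 := by
    rw [Prod.norm_def]; simp
  exact norm_Dop_iterate2_le hv hw m n f hf (a, b)

lemma eventuallyEq_iteratedDeriv {f g : ℝ → F} {x : ℝ} (h : f =ᶠ[nhds x] g) (n : ℕ) :
    iteratedDeriv n f =ᶠ[nhds x] iteratedDeriv n g := by
  induction n with
  | zero => simpa [iteratedDeriv_zero] using h
  | succ n IH =>
    have := IH.deriv
    simpa [iteratedDeriv_succ] using this

lemma periodic_iteratedDeriv {f : ℝ → F} {c : ℝ} (h : Function.Periodic f c) (n : ℕ) :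
    Function.Periodic (iteratedDeriv n f) c := by
  intro x
  have h1 : (fun z => f (z + c)) = f := funext h
  calc iteratedDeriv n f (x + c) = iteratedDeriv n (fun z => f (z + c)) x := by
        rw [iteratedDeriv_comp_add_const]
    _ = iteratedDeriv n f x := by rw [h1]

lemma periodic_bound {f : ℝ → F} {c : ℝ} (hc : 0 < c) (h : Function.Periodic f c)
    (hf : Continuous f) : ∃ B, ∀ x, ‖f x‖ ≤ B := by
  obtain ⟨B, hB⟩ := (isCompact_Icc (a := (0 : ℝ)) (b := c)).exists_bound_of_continuousOn
    hf.continuousOn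
  refine ⟨B, fun x => ?_⟩
  obtain ⟨y, hy, hxy⟩ := h.exists_mem_Ico₀ hc x
  rw [hxy]
  exact hB y ⟨hy.1, hy.2.le⟩


section NmapSection

abbrev E2 := EuclideanSpace ℝ (Fin 2)

def Nmap : E2 → E2 := fun u => ‖u‖⁻¹ • u

def tset : Set E2 := {u : E2 | u ≠ 0}

lemma tset_open : IsOpen tset := by
  have : tset = ({0} : Set E2)ᶜ := by ext u; simp [tset]
  rw [this]
  exact isClosed_singleton.isOpen_compl

lemma contDiffOn_Nmap : ContDiffOn ℝ ∞ Nmap tset := by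
  intro u hu
  have h1 : ContDiffAt ℝ ∞ Nmap u := by
    have hn : ContDiffAt ℝ ∞ (fun u : E2 => ‖u‖) u := contDiffAt_norm ℝ hu
    have := (hn.inv (norm_ne_zero_iff.mpr hu)).smul contDiffAt_id
    exact this
  exact h1.contDiffWithinAt

lemma Nmap_smul {r : ℝ} (hr : 0 < r) (z : E2) : Nmap (r • z) = Nmap z := by
  rcases eq_or_ne z 0 with rfl | hz
  · simp [Nmap]
  · unfold Nmap
    rw [norm_smul, smul_smul]
    congr 1
    rw [Real.norm_eq_abs, abs_of_pos hr, mul_inv, mul_comm, ← mul_assoc,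
      mul_inv_cancel₀ hr.ne', one_mul]

lemma Nmap_bound (i : ℕ) : ∃ A : ℝ, 0 ≤ A ∧ ∀ u : E2, u ≠ 0 →
    ‖iteratedFDerivWithin ℝ i Nmap tset u‖ ≤ A * ‖u‖⁻¹ ^ i := by
  have hcont : ContinuousOn (iteratedFDerivWithin ℝ i Nmap tset) tset :=
    contDiffOn_Nmap.continuousOn_iteratedFDerivWithin (coe_le_infty i) tset_open.uniqueDiffOn
  have hsub : sphere (0 : E2) 1 ⊆ tset := by
    intro u hu
    simp only [mem_sphere_iff_norm, sub_zero] at hu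
    intro h0
    rw [h0] at hu; simp at hu
  obtain ⟨A, hA⟩ := (isCompact_sphere (0 : E2) 1).exists_bound_of_continuousOn (hcont.mono hsub)
  refine ⟨max A 0, le_max_right _ _, fun u hu => ?_⟩
  have hr : (0 : ℝ) < ‖u‖ := norm_pos_iff.mpr hu
  set r : ℝ := ‖u‖ with hrdef
  set w : E2 := r⁻¹ • u with hwdef
  have hw : w ∈ sphere (0 : E2) 1 := by
    simp only [mem_sphere_iff_norm, sub_zero, hwdef, norm_smul, Real.norm_eq_abs,
      abs_of_pos (inv_pos.mpr hr)]
    field_simp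
    exact hrdef.symm
  set g : E2 →L[ℝ] E2 := r⁻¹ • (ContinuousLinearMap.id ℝ E2) with hgdef
  have hgnorm : ‖g‖ ≤ r⁻¹ := by
    refine ContinuousLinearMap.opNorm_le_bound _ (inv_nonneg.mpr hr.le) fun z => ?_
    simp only [hgdef, ContinuousLinearMap.smul_apply, ContinuousLinearMap.id_apply,
      norm_smul, Real.norm_eq_abs, abs_of_pos (inv_pos.mpr hr)]
    exact le_rfl
  have hgpre : g ⁻¹' tset = tset := by
    ext z
    simp only [tset, mem_preimage, mem_setOf_eq, hgdef, ContinuousLinearMap.smul_apply,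
      ContinuousLinearMap.id_apply, smul_ne_zero_iff]
    constructor
    · tauto
    · intro hz; exact ⟨inv_ne_zero hr.ne', hz⟩
  have hNg : Nmap ∘ g = Nmap := by
    funext z
    simp only [Function.comp_apply, hgdef, ContinuousLinearMap.smul_apply,
      ContinuousLinearMap.id_apply]
    exact Nmap_smul (inv_pos.mpr hr) z
  have hgu : g u ∈ tset := by
    have : g u = w := rfl
    rw [this]; exact hsub hw
  have hcomp := g.iteratedFDerivWithin_comp_right contDiffOn_Nmap tset_open.uniqueDiffOn
    (by rw [hgpre]; exact tset_open.uniqueDiffOn) hgu (coe_le_infty i)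
  rw [hNg, hgpre] at hcomp
  have hgw : g u = w := rfl
  rw [hcomp, hgw]
  calc ‖(iteratedFDerivWithin ℝ i Nmap tset w).compContinuousLinearMap fun _ => g‖
      ≤ ‖iteratedFDerivWithin ℝ i Nmap tset w‖ * ∏ _j : Fin i, ‖g‖ :=
        ContinuousMultilinearMap.norm_compContinuousLinearMap_le _ _
    _ ≤ max A 0 * ‖u‖⁻¹ ^ i := by
        apply mul_le_mul
        · exact (hA w hw).trans (le_max_left _ _)
        · calc (∏ _j : Fin i, ‖g‖) ≤ ∏ _j : Fin i, r⁻¹ :=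
              Finset.prod_le_prod (fun _ _ => norm_nonneg _) (fun _ _ => hgnorm)
          _ = ‖u‖⁻¹ ^ i := by simp [hrdef]
        · exact Finset.prod_nonneg fun _ _ => norm_nonneg _
        · exact le_max_right _ _

lemma q_ne (q : ℝ → E2) (hper : Function.Periodic q (2 * Real.pi))
    (hinj : Set.InjOn q (Set.Ico 0 (2 * Real.pi))) {x y : ℝ} (h1 : x ≠ y)
    (h2 : |x - y| < 2 * Real.pi) : q x ≠ q y := by
  have hc : (0 : ℝ) < 2 * Real.pi := by positivity
  obtain ⟨n, hn, -⟩ := existsUnique_add_zsmul_mem_Ico hc x 0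
  obtain ⟨mm, hm, -⟩ := existsUnique_add_zsmul_mem_Ico hc y 0
  rw [zero_add] at hn hm
  intro heq
  have e1 : q (x + n • (2 * Real.pi)) = q x := hper.zsmul n x
  have e2 : q (y + mm • (2 * Real.pi)) = q y := hper.zsmul mm y
  have : x + n • (2 * Real.pi) = y + mm • (2 * Real.pi) := by
    apply hinj _ _ (by rw [e1, e2, heq])
    · exact hn
    · exact hm
  have hk : x - y = ((mm - n : ℤ) : ℝ) * (2 * Real.pi) := by
    push_cast
    simp only [zsmul_eq_mul] at this
    linarith
  rcases eq_or_ne (mm - n) 0 with h0 | h0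
  · rw [h0] at hk; simp at hk; exact h1 (by linarith)
  · have : (1 : ℝ) ≤ |((mm - n : ℤ) : ℝ)| := by
      rw [← Int.cast_abs]
      exact_mod_cast Int.one_le_abs h0
    have habs : |x - y| = |((mm - n : ℤ) : ℝ)| * (2 * Real.pi) := by
      rw [hk, abs_mul, abs_of_pos hc]
    nlinarith [abs_nonneg (x - y)]

end NmapSection


section Chord

lemma chord_lb (q : ℝ → E2) (hq : ContDiff ℝ (⊤ : ℕ∞) q) (hper : Function.Periodic q (2 * Real.pi))
    (hspeed : ∀ φ, ‖deriv q φ‖ = 1) (hinj : Set.InjOn q (Set.Ico 0 (2 * Real.pi))) :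
    ∃ c : ℝ, 0 < c ∧ ∀ x y : ℝ, 0 < |x - y| → |x - y| ≤ Real.pi →
      c * |x - y| ≤ ‖q x - q y‖ := by
  have hπ : (0 : ℝ) < Real.pi := Real.pi_pos
  have hc2 : (0 : ℝ) < 2 * Real.pi := by positivity
  set g : ℝ → E2 := deriv q with hgdef
  have hgc : Continuous g := hq.continuous_deriv (by simp)
  have hgper : Function.Periodic g (2 * Real.pi) := by
    intro x
    have h1 : (fun z => q (z + 2 * Real.pi)) = q := funext fun z => hper z
    have h2 := deriv_comp_add_const q (2 * Real.pi) x
    rw [h1] at h2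
    exact h2.symm
  have hψc : Continuous (fun p : ℝ × ℝ => ⟪g p.1, g p.2⟫) :=
    (hgc.comp continuous_fst).inner (hgc.comp continuous_snd)
  -- Step 1: get δ such that nearby tangent vectors have inner product ≥ 1/2
  have hδex : ∃ δ : ℝ, 0 < δ ∧ δ ≤ 1 ∧ δ ≤ Real.pi ∧
      ∀ s t : ℝ, |s - t| ≤ δ → (1 : ℝ) / 2 ≤ ⟪g s, g t⟫ := by
    have key : ∃ δ0 : ℝ, 0 < δ0 ∧ ∀ p : ℝ × ℝ, p.1 ∈ Icc (-1 : ℝ) (2 * Real.pi + 1) →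
        p.2 ∈ Icc (0 : ℝ) (2 * Real.pi) → |p.1 - p.2| < δ0 →
        (1 : ℝ) / 2 ≤ ⟪g p.1, g p.2⟫ := by
      set S : Set (ℝ × ℝ) := (Icc (-1 : ℝ) (2 * Real.pi + 1) ×ˢ Icc (0 : ℝ) (2 * Real.pi)) ∩
        {p : ℝ × ℝ | ⟪g p.1, g p.2⟫ ≤ 1 / 2} with hSdef
      have hScomp : IsCompact S := (isCompact_Icc.prod isCompact_Icc).inter_right
        (isClosed_le hψc continuous_const)
      rcases S.eq_empty_or_nonempty with hSe | hSne
      · refine ⟨1, one_pos, fun p hp1 hp2 _ => ?_⟩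
        by_contra hlt
        have hmem : p ∈ S := ⟨⟨hp1, hp2⟩, (lt_of_not_ge hlt).le⟩
        rw [hSe] at hmem
        exact hmem
      · obtain ⟨p₀, hp₀S, hmin⟩ := hScomp.exists_isMinOn hSne
          ((continuous_fst.sub continuous_snd).abs.continuousOn)
        have hd0 : 0 < |p₀.1 - p₀.2| := by
          rcases eq_or_ne p₀.1 p₀.2 with he | hne
          · exfalso
            have hone : ⟪g p₀.1, g p₀.2⟫ = 1 := by
              rw [he, real_inner_self_eq_norm_sq, hspeed]
              norm_num
            have h6 := hp₀S.2
            simp only [Set.mem_setOf_eq] at h6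
            rw [hone] at h6
            norm_num at h6
          · exact abs_pos.mpr (sub_ne_zero.mpr hne)
        refine ⟨|p₀.1 - p₀.2|, hd0, fun p hp1 hp2 hlt => ?_⟩
        by_contra hcon
        have hpS : p ∈ S := ⟨⟨hp1, hp2⟩, (lt_of_not_ge hcon).le⟩
        exact absurd (isMinOn_iff.mp hmin p hpS) (not_le.mpr hlt)
    obtain ⟨δ0, hδ0, hkey⟩ := key
    refine ⟨min (δ0 / 2) (min 1 Real.pi), by positivity,
      le_trans (min_le_right _ _) (min_le_left _ _),
      le_trans (min_le_right _ _) (min_le_right _ _), ?_⟩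
    intro s t hst
    obtain ⟨n, hn, -⟩ := existsUnique_add_zsmul_mem_Ico hc2 t 0
    rw [zero_add] at hn
    have hgs : g (s + n • (2 * Real.pi)) = g s := hgper.zsmul n s
    have hgt : g (t + n • (2 * Real.pi)) = g t := hgper.zsmul n t
    have hst1 : |s - t| ≤ 1 := le_trans hst (le_trans (min_le_right _ _) (min_le_left _ _))
    have habs := abs_le.mp hst1
    have hs'mem : s + n • (2 * Real.pi) ∈ Icc (-1 : ℝ) (2 * Real.pi + 1) := by
      have h1 : s + n • (2 * Real.pi) = (t + n • (2 * Real.pi)) + (s - t) := by ring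
      constructor
      · rw [h1]; linarith [hn.1]
      · rw [h1]; linarith [hn.2]
    have ht'mem : t + n • (2 * Real.pi) ∈ Icc (0 : ℝ) (2 * Real.pi) := ⟨hn.1, hn.2.le⟩
    have hdlt : |(s + n • (2 * Real.pi)) - (t + n • (2 * Real.pi))| < δ0 := by
      have : (s + n • (2 * Real.pi)) - (t + n • (2 * Real.pi)) = s - t := by ring
      rw [this]
      exact lt_of_le_of_lt (le_trans hst (min_le_left _ _)) (by linarith)
    have h7 := hkey (s + n • (2 * Real.pi), t + n • (2 * Real.pi)) hs'mem ht'mem hdlt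
    rw [← hgs, ← hgt]
    exact h7
  obtain ⟨δ, hδpos, hδ1, hδπ, hδinner⟩ := hδex
  -- Step 2: near-diagonal lower bound
  have hnear : ∀ x y : ℝ, y ≤ x → x - y ≤ δ → (x - y) / 2 ≤ ‖q x - q y‖ := by
    intro x y hyx hxyδ
    have hdiffble : ∀ t ∈ Set.uIcc y x, DifferentiableAt ℝ q t := fun t _ =>
      (hq.differentiable (by simp)).differentiableAt
    have hint : IntervalIntegrable g MeasureTheory.volume y x := hgc.intervalIntegrable y x
    have hftc : (∫ t in y..x, g t) = q x - q y :=
      intervalIntegral.integral_deriv_eq_sub hdiffble hint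
    have hcomm : (∫ t in y..x, ⟪g y, g t⟫) = ⟪g y, q x - q y⟫ := by
      have h3 := (innerSL ℝ (g y)).intervalIntegral_comp_comm hint
      simp only [innerSL_apply_apply] at h3
      rw [h3, hftc]
    have hmono : (x - y) * (1 / 2) ≤ ∫ t in y..x, ⟪g y, g t⟫ := by
      have hconst : (∫ _t in y..x, (1 / 2 : ℝ)) = (x - y) * (1 / 2) := by
        rw [intervalIntegral.integral_const, smul_eq_mul]
      rw [← hconst]
      apply intervalIntegral.integral_mono_on hyx intervalIntegrable_const
        ((continuous_const.inner hgc).intervalIntegrable y x)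
      intro t ht
      apply hδinner y t
      rw [abs_sub_comm, abs_of_nonneg (by linarith [ht.1])]
      linarith [ht.2]
    have hcs : ⟪g y, q x - q y⟫ ≤ ‖q x - q y‖ := by
      calc ⟪g y, q x - q y⟫ ≤ ‖g y‖ * ‖q x - q y‖ := real_inner_le_norm _ _
        _ = ‖q x - q y‖ := by rw [hspeed y, one_mul]
    rw [hcomm] at hmono
    linarith
  -- Step 3: far from diagonal
  have hfar : ∃ c₂ : ℝ, 0 < c₂ ∧ ∀ x y : ℝ, δ ≤ |x - y| → |x - y| ≤ Real.pi →
      c₂ ≤ ‖q x - q y‖ := by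
    set K : Set (ℝ × ℝ) := ((Icc (-Real.pi) (3 * Real.pi) ×ˢ Icc (0 : ℝ) (2 * Real.pi)) ∩
      {p : ℝ × ℝ | δ ≤ |p.1 - p.2|}) ∩ {p : ℝ × ℝ | |p.1 - p.2| ≤ Real.pi} with hKdef
    have hKcomp : IsCompact K := (((isCompact_Icc.prod isCompact_Icc).inter_right
      (isClosed_le continuous_const (continuous_fst.sub continuous_snd).abs)).inter_right
      (isClosed_le (continuous_fst.sub continuous_snd).abs continuous_const))
    have hred : ∀ x y : ℝ, δ ≤ |x - y| → |x - y| ≤ Real.pi →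
        ∃ p ∈ K, ‖q x - q y‖ = ‖q p.1 - q p.2‖ := by
      intro x y h1 h2
      obtain ⟨n, hn, -⟩ := existsUnique_add_zsmul_mem_Ico hc2 y 0
      rw [zero_add] at hn
      have heq : (x + n • (2 * Real.pi)) - (y + n • (2 * Real.pi)) = x - y := by ring
      have habs := abs_le.mp h2
      refine ⟨(x + n • (2 * Real.pi), y + n • (2 * Real.pi)), ⟨⟨⟨?_, ?_⟩, ?_⟩, ?_⟩, ?_⟩
      · constructor
        · show -Real.pi ≤ x + n • (2 * Real.pi)
          linarith [hn.1, habs.1]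
        · show x + n • (2 * Real.pi) ≤ 3 * Real.pi
          linarith [hn.2, habs.2]
      · exact ⟨hn.1, hn.2.le⟩
      · show δ ≤ |(x + n • (2 * Real.pi)) - (y + n • (2 * Real.pi))|
        rw [heq]; exact h1
      · show |(x + n • (2 * Real.pi)) - (y + n • (2 * Real.pi))| ≤ Real.pi
        rw [heq]; exact h2
      · show ‖q x - q y‖ = ‖q (x + n • (2 * Real.pi)) - q (y + n • (2 * Real.pi))‖
        rw [hper.zsmul n x, hper.zsmul n y]
    rcases K.eq_empty_or_nonempty with hKe | hKne
    · refine ⟨1, one_pos, fun x y h1 h2 => ?_⟩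
      obtain ⟨p, hp, -⟩ := hred x y h1 h2
      rw [hKe] at hp
      exact absurd hp (Set.notMem_empty p)
    · obtain ⟨p₀, hp₀, hmin⟩ := hKcomp.exists_isMinOn hKne
        (((hq.continuous.comp continuous_fst).sub
          (hq.continuous.comp continuous_snd)).norm.continuousOn)
      have hp₀pos : 0 < ‖q p₀.1 - q p₀.2‖ := by
        rw [norm_pos_iff, sub_ne_zero]
        apply q_ne q hper hinj
        · have : δ ≤ |p₀.1 - p₀.2| := hp₀.1.2
          have habs : 0 < |p₀.1 - p₀.2| := lt_of_lt_of_le hδpos this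
          exact sub_ne_zero.mp (abs_pos.mp habs)
        · exact lt_of_le_of_lt hp₀.2 (by linarith)
      refine ⟨‖q p₀.1 - q p₀.2‖, hp₀pos, fun x y h1 h2 => ?_⟩
      obtain ⟨p, hp, he⟩ := hred x y h1 h2
      rw [he]
      exact isMinOn_iff.mp hmin p hp
  obtain ⟨c₂, hc₂pos, hfar'⟩ := hfar
  refine ⟨min (1 / 2) (c₂ / Real.pi), by positivity, fun x y h1 h2 => ?_⟩
  rcases le_or_gt |x - y| δ with hle | hgt
  · have hhalf : |x - y| / 2 ≤ ‖q x - q y‖ := by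
      rcases le_total y x with h | h
      · have hxx := hnear x y h (by rwa [abs_of_nonneg (by linarith)] at hle)
        rwa [abs_of_nonneg (by linarith)]
      · have hxx := hnear y x h (by rwa [abs_of_nonpos (by linarith), neg_sub] at hle)
        rw [norm_sub_rev]
        rwa [abs_of_nonpos (by linarith), neg_sub]
    calc min (1 / 2) (c₂ / Real.pi) * |x - y| ≤ (1 / 2) * |x - y| :=
          mul_le_mul_of_nonneg_right (min_le_left _ _) (abs_nonneg _)
      _ ≤ ‖q x - q y‖ := by linarith
  · have hfx := hfar' x y hgt.le h2
    calc min (1 / 2) (c₂ / Real.pi) * |x - y| ≤ (c₂ / Real.pi) * Real.pi := by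
          apply mul_le_mul (min_le_right _ _) h2 (abs_nonneg _) (by positivity)
      _ = c₂ := by field_simp
      _ ≤ ‖q x - q y‖ := hfx

end Chord

end Stmt5Aux

open scoped ContDiff in
open Stmt5Aux in
/-- Derivative bounds for the unit chord direction
`e(φ₁,φ₂) = (q(φ₁) - q(φ₂))/‖q(φ₁) - q(φ₂)‖`: each mixed partial derivative
`∂_{φ₁}^m ∂_{φ₂}^n e` is `O(|φ₁ - φ₂|^{-(m+n)})` uniformly for `0 < |φ₁ - φ₂| ≤ π`. -/
theorem stmt_5
    (q : ℝ → EuclideanSpace ℝ (Fin 2))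
    (hq : ContDiff ℝ (⊤ : ℕ∞) q)
    (hper : Function.Periodic q (2 * Real.pi))
    (hspeed : ∀ φ, ‖deriv q φ‖ = 1)
    (hinj : Set.InjOn q (Set.Ico 0 (2 * Real.pi)))
    (e : ℝ → ℝ → EuclideanSpace ℝ (Fin 2))
    (he : ∀ φ₁ φ₂, e φ₁ φ₂ = ‖q φ₁ - q φ₂‖⁻¹ • (q φ₁ - q φ₂)) :
    ∀ m n : ℕ, ∃ C : ℝ, ∀ φ₁ φ₂ : ℝ, 0 < |φ₁ - φ₂| → |φ₁ - φ₂| ≤ Real.pi →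
      ‖iteratedDeriv m (fun x => iteratedDeriv n (fun y => e x y) φ₂) φ₁‖
        ≤ C / |φ₁ - φ₂| ^ (m + n) := by
  classical
  have hq' : ContDiff ℝ ∞ q := hq.of_le (by simp)
  intro m n
  set k := m + n with hk
  set v : ℝ × ℝ → E2 := fun p => q p.1 - q p.2 with hvdef
  have hv : ContDiff ℝ ∞ v := (hq'.comp contDiff_fst).sub (hq'.comp contDiff_snd)
  set U : Set (ℝ × ℝ) := v ⁻¹' tset with hUdef
  have hUopen : IsOpen U := tset_open.preimage hv.continuous
  have hFsm : ContDiffOn ℝ ∞ (Nmap ∘ v) U :=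
    contDiffOn_Nmap.comp hv.contDiffOn (fun p hp => hp)
  -- bounds on derivatives of q
  have hqb : ∀ i : ℕ, ∃ B : ℝ, ∀ φ : ℝ, ‖iteratedFDeriv ℝ i q φ‖ ≤ B := by
    intro i
    have hper' : Function.Periodic (iteratedDeriv i q) (2 * Real.pi) :=
      periodic_iteratedDeriv hper i
    have hcont : Continuous (iteratedDeriv i q) := by
      rw [show iteratedDeriv i q = fun x => iteratedDeriv i q x from rfl]
      have : Continuous (fun x => iteratedFDeriv ℝ i q x) :=
        hq.continuous_iteratedFDeriv (by exact_mod_cast le_top)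
      have h2 : Continuous (fun x : ℝ => iteratedFDeriv ℝ i q x (fun _ => (1:ℝ))) :=
        (continuous_eval_const _).comp this
      simpa [iteratedDeriv_eq_iteratedFDeriv] using h2
    obtain ⟨B, hB⟩ := periodic_bound (by positivity) hper' hcont
    exact ⟨B, fun φ => by rw [norm_iteratedFDeriv_eq_norm_iteratedDeriv]; exact hB φ⟩
  choose b hb using hqb
  set B : ℝ := 1 + ∑ i ∈ Finset.range (k + 1), |b i| with hBdef
  have hB1 : 1 ≤ B := by
    have : (0:ℝ) ≤ ∑ i ∈ Finset.range (k + 1), |b i| :=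
      Finset.sum_nonneg fun i _ => abs_nonneg _
    linarith
  have hBb : ∀ i, i ≤ k → ∀ φ, ‖iteratedFDeriv ℝ i q φ‖ ≤ B := by
    intro i hi φ
    have h1 : |b i| ≤ ∑ j ∈ Finset.range (k + 1), |b j| :=
      Finset.single_le_sum (fun j _ => abs_nonneg (b j)) (Finset.mem_range.mpr (by omega))
    calc ‖iteratedFDeriv ℝ i q φ‖ ≤ b i := hb i φ
      _ ≤ |b i| := le_abs_self _
      _ ≤ B := by rw [hBdef]; linarith
  -- bounds on derivatives of Nmap
  choose A hA0 hA using Nmap_bound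
  set A' : ℝ := 1 + ∑ i ∈ Finset.range (k + 1), A i with hA'def
  have hA'1 : 1 ≤ A' := by
    have : (0:ℝ) ≤ ∑ i ∈ Finset.range (k + 1), A i :=
      Finset.sum_nonneg fun i _ => hA0 i
    linarith
  have hA'i : ∀ i, i ≤ k → A i ≤ A' := by
    intro i hi
    have h1 : A i ≤ ∑ j ∈ Finset.range (k + 1), A j :=
      Finset.single_le_sum (fun j _ => hA0 j) (Finset.mem_range.mpr (by omega))
    rw [hA'def]; linarith
  -- chord bound
  obtain ⟨c, hcpos, hchord⟩ := chord_lb q hq hper hspeed hinj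
  set M : ℝ := max 1 (2 * B) with hMdef
  have hM1 : 1 ≤ M := le_max_left _ _
  set D : ℝ := 1 + 2 * B with hDdef
  have hD1 : 1 ≤ D := by linarith
  refine ⟨(k.factorial : ℝ) * A' * M ^ k * (c⁻¹) ^ k * D ^ k, ?_⟩
  intro φ₁ φ₂ hpos hle
  have hπ2 : |φ₁ - φ₂| < 2 * Real.pi := lt_of_le_of_lt hle (by linarith [Real.pi_pos])
  have hne : q φ₁ ≠ q φ₂ :=
    q_ne q hper hinj (fun h => by simp [h] at hpos) hπ2
  have hp0U : ((φ₁, φ₂) : ℝ × ℝ) ∈ U := by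
    show v (φ₁, φ₂) ∈ tset
    exact sub_ne_zero.mpr hne
  obtain ⟨ε, hεpos, hball⟩ := Metric.isOpen_iff.mp hUopen _ hp0U
  set χ : ContDiffBump ((φ₁, φ₂) : ℝ × ℝ) :=
    ⟨ε/4, ε/2, by positivity, by linarith⟩ with hχdef
  set G : ℝ × ℝ → E2 := fun p => χ p • (Nmap ∘ v) p with hGdef
  have hclsub : Metric.closedBall ((φ₁, φ₂) : ℝ × ℝ) (ε/2) ⊆ U :=
    le_trans (Metric.closedBall_subset_ball (by linarith)) hball
  have hGsm : ContDiff ℝ ∞ G := by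
    rw [contDiff_iff_contDiffAt]
    intro p
    by_cases hpU : p ∈ U
    · exact (χ.contDiffAt).smul ((hFsm p hpU).contDiffAt (hUopen.mem_nhds hpU))
    · have hout : ∀ᶠ z in nhds p, G z = 0 := by
        have hpts : p ∉ tsupport (χ : ℝ × ℝ → ℝ) := by
          rw [χ.tsupport_eq]
          intro hmem
          exact hpU (hclsub hmem)
        have hev : ∀ᶠ z in nhds p, z ∉ tsupport (χ : ℝ × ℝ → ℝ) :=
          (isClosed_tsupport _).isOpen_compl.eventually_mem hpts
        refine hev.mono fun z hz => ?_
        rw [hGdef]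
        simp [image_eq_zero_of_notMem_tsupport hz]
      exact (contDiffAt_const (c := (0 : E2))).congr_of_eventuallyEq hout
  have hGF : ∀ z ∈ Metric.ball ((φ₁, φ₂) : ℝ × ℝ) (ε/4), G z = Nmap (v z) := by
    intro z hz
    have h1 : χ z = 1 := χ.one_of_mem_closedBall (Metric.ball_subset_closedBall hz)
    rw [hGdef]
    simp [h1]
  have heF : ∀ x y : ℝ, e x y = Nmap (v (x, y)) := fun x y => he x y
  -- inner eventual equality
  have hinner : ∀ x : ℝ, |x - φ₁| < ε/8 →
      iteratedDeriv n (fun y => e x y) φ₂ = iteratedDeriv n (fun y => G (x, y)) φ₂ := by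
    intro x hx
    have hev : (fun y => e x y) =ᶠ[nhds φ₂] (fun y => G (x, y)) := by
      apply Filter.eventuallyEq_of_mem (Metric.ball_mem_nhds φ₂ (by positivity : (0:ℝ) < ε/8))
      intro y hy
      rw [Metric.mem_ball, Real.dist_eq] at hy
      have hmem : ((x, y) : ℝ × ℝ) ∈ Metric.ball ((φ₁, φ₂) : ℝ × ℝ) (ε/4) := by
        rw [Metric.mem_ball, Prod.dist_eq]
        rw [Real.dist_eq, Real.dist_eq]
        apply max_lt <;> [linarith [hx]; linarith [hy]]
      show e x y = G (x, y)
      rw [heF x y, ← hGF (x, y) hmem]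
    exact (eventuallyEq_iteratedDeriv hev n).eq_of_nhds
  have houter : iteratedDeriv m (fun x => iteratedDeriv n (fun y => e x y) φ₂) φ₁
      = iteratedDeriv m (fun x => iteratedDeriv n (fun y => G (x, y)) φ₂) φ₁ := by
    apply Filter.EventuallyEq.eq_of_nhds
    apply eventuallyEq_iteratedDeriv _ m
    apply Filter.eventuallyEq_of_mem (Metric.ball_mem_nhds φ₁ (by positivity : (0:ℝ) < ε/8))
    intro x hx
    rw [Metric.mem_ball, Real.dist_eq] at hx
    exact hinner x hx
  rw [houter]
  have hkey := key_bound hGsm m n φ₁ φ₂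
  -- identify iterated derivative of G with that of Nmap ∘ v within U
  have hGFev : G =ᶠ[nhds ((φ₁, φ₂) : ℝ × ℝ)] (Nmap ∘ v) := by
    apply Filter.eventuallyEq_of_mem (Metric.ball_mem_nhds _ (by positivity : (0:ℝ) < ε/4))
    exact fun z hz => hGF z hz
  have hGFeq : iteratedFDeriv ℝ k G (φ₁, φ₂) = iteratedFDeriv ℝ k (Nmap ∘ v) (φ₁, φ₂) := by
    rw [← iteratedFDerivWithin_univ, ← iteratedFDerivWithin_univ]
    apply Filter.EventuallyEq.iteratedFDerivWithin_eq
    · rw [nhdsWithin_univ]; exact hGFev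
    · exact hGFev.eq_of_nhds
  have hwithin : iteratedFDeriv ℝ k (Nmap ∘ v) (φ₁, φ₂)
      = iteratedFDerivWithin ℝ k (Nmap ∘ v) U (φ₁, φ₂) :=
    (iteratedFDerivWithin_of_isOpen k hUopen hp0U).symm
  -- chord bound at this point
  have hwne : v (φ₁, φ₂) ≠ 0 := sub_ne_zero.mpr hne
  have hwpos : 0 < ‖v (φ₁, φ₂)‖ := norm_pos_iff.mpr hwne
  have hwlow : c * |φ₁ - φ₂| ≤ ‖v (φ₁, φ₂)‖ := hchord φ₁ φ₂ hpos hle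
  have hwM : ‖v (φ₁, φ₂)‖ ≤ M := by
    have h0 : ∀ φ, ‖q φ‖ ≤ B := by
      intro φ
      have := hBb 0 (by omega) φ
      rwa [norm_iteratedFDeriv_zero] at this
    calc ‖v (φ₁, φ₂)‖ = ‖q φ₁ - q φ₂‖ := rfl
      _ ≤ ‖q φ₁‖ + ‖q φ₂‖ := norm_sub_le _ _
      _ ≤ 2 * B := by linarith [h0 φ₁, h0 φ₂]
      _ ≤ M := le_max_right _ _
  -- Faà di Bruno hypotheses
  have hC : ∀ i, i ≤ k → ‖iteratedFDerivWithin ℝ i Nmap tset (v (φ₁, φ₂))‖ ≤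
      A' * M ^ k * (‖v (φ₁, φ₂)‖⁻¹) ^ k := by
    intro i hi
    have h1 := hA i (v (φ₁, φ₂)) hwne
    have hkey2 : (‖v (φ₁, φ₂)‖⁻¹) ^ i ≤ M ^ k * (‖v (φ₁, φ₂)‖⁻¹) ^ k := by
      have hsplit : M ^ k * (‖v (φ₁, φ₂)‖⁻¹) ^ k
          = (M ^ k * (‖v (φ₁, φ₂)‖⁻¹) ^ (k - i)) * (‖v (φ₁, φ₂)‖⁻¹) ^ i := by
        rw [mul_assoc, ← pow_add, Nat.sub_add_cancel hi]
      rw [hsplit]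
      apply le_mul_of_one_le_left (pow_nonneg (inv_nonneg.mpr hwpos.le) i)
      have h4 : ‖v (φ₁, φ₂)‖ ^ (k - i) ≤ M ^ (k - i) := pow_le_pow_left₀ hwpos.le hwM _
      have h5 : (M ^ (k - i))⁻¹ ≤ (‖v (φ₁, φ₂)‖ ^ (k - i))⁻¹ :=
        inv_anti₀ (pow_pos hwpos _) h4
      calc (1:ℝ) = M ^ (k - i) * (M ^ (k - i))⁻¹ := (mul_inv_cancel₀ (by positivity)).symm
        _ ≤ M ^ k * (‖v (φ₁, φ₂)‖⁻¹) ^ (k - i) := by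
            rw [inv_pow]
            exact mul_le_mul (pow_le_pow_right₀ hM1 (Nat.sub_le k i)) h5 (by positivity)
              (by positivity)
    calc ‖iteratedFDerivWithin ℝ i Nmap tset (v (φ₁, φ₂))‖
        ≤ A i * (‖v (φ₁, φ₂)‖⁻¹) ^ i := h1
      _ ≤ A' * (M ^ k * (‖v (φ₁, φ₂)‖⁻¹) ^ k) := by
          apply mul_le_mul (hA'i i hi) hkey2 (by positivity) (by linarith)
      _ = A' * M ^ k * (‖v (φ₁, φ₂)‖⁻¹) ^ k := by ring
  have hvb : ∀ i, 1 ≤ i → i ≤ k → ‖iteratedFDerivWithin ℝ i v U ((φ₁, φ₂) : ℝ × ℝ)‖ ≤ D ^ i := by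
    intro i h1i hik
    rw [iteratedFDerivWithin_of_isOpen i hUopen hp0U]
    have hfst : ∀ p : ℝ × ℝ, ‖iteratedFDeriv ℝ i (q ∘ Prod.fst) p‖ ≤ B := by
      intro p
      rw [show (q ∘ Prod.fst : ℝ × ℝ → EuclideanSpace ℝ (Fin 2)) = q ∘ ⇑(ContinuousLinearMap.fst ℝ ℝ ℝ) from by rw [ContinuousLinearMap.coe_fst'],
        (ContinuousLinearMap.fst ℝ ℝ ℝ).iteratedFDeriv_comp_right hq' p
        (coe_le_infty i)]
      calc ‖(iteratedFDeriv ℝ i q p.1).compContinuousLinearMap fun _ => ContinuousLinearMap.fst ℝ ℝ ℝ‖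
          ≤ ‖iteratedFDeriv ℝ i q p.1‖ * ∏ _j : Fin i, ‖ContinuousLinearMap.fst ℝ ℝ ℝ‖ :=
            ContinuousMultilinearMap.norm_compContinuousLinearMap_le _ _
        _ ≤ B * 1 := by
            apply mul_le_mul (hBb i hik p.1)
            · calc (∏ _j : Fin i, ‖ContinuousLinearMap.fst ℝ ℝ ℝ‖)
                  ≤ ∏ _j : Fin i, (1:ℝ) :=
                    Finset.prod_le_prod (fun _ _ => norm_nonneg _)
                      (fun _ _ => ContinuousLinearMap.norm_fst_le ℝ ℝ ℝ)
                _ = 1 := by simp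
            · exact Finset.prod_nonneg fun _ _ => norm_nonneg _
            · linarith
        _ = B := mul_one _
    have hsnd : ∀ p : ℝ × ℝ, ‖iteratedFDeriv ℝ i (q ∘ Prod.snd) p‖ ≤ B := by
      intro p
      rw [show (q ∘ Prod.snd : ℝ × ℝ → EuclideanSpace ℝ (Fin 2)) = q ∘ ⇑(ContinuousLinearMap.snd ℝ ℝ ℝ) from by rw [ContinuousLinearMap.coe_snd'],
        (ContinuousLinearMap.snd ℝ ℝ ℝ).iteratedFDeriv_comp_right hq' p
        (coe_le_infty i)]
      calc ‖(iteratedFDeriv ℝ i q p.2).compContinuousLinearMap fun _ => ContinuousLinearMap.snd ℝ ℝ ℝ‖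
          ≤ ‖iteratedFDeriv ℝ i q p.2‖ * ∏ _j : Fin i, ‖ContinuousLinearMap.snd ℝ ℝ ℝ‖ :=
            ContinuousMultilinearMap.norm_compContinuousLinearMap_le _ _
        _ ≤ B * 1 := by
            apply mul_le_mul (hBb i hik p.2)
            · calc (∏ _j : Fin i, ‖ContinuousLinearMap.snd ℝ ℝ ℝ‖)
                  ≤ ∏ _j : Fin i, (1:ℝ) :=
                    Finset.prod_le_prod (fun _ _ => norm_nonneg _)
                      (fun _ _ => ContinuousLinearMap.norm_snd_le ℝ ℝ ℝ)
                _ = 1 := by simp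
            · exact Finset.prod_nonneg fun _ _ => norm_nonneg _
            · linarith
        _ = B := mul_one _
    have hvsplit : iteratedFDeriv ℝ i v ((φ₁, φ₂) : ℝ × ℝ)
        = iteratedFDeriv ℝ i (q ∘ Prod.fst) (φ₁, φ₂)
          + iteratedFDeriv ℝ i (-(q ∘ Prod.snd)) (φ₁, φ₂) := by
      have h9 := iteratedFDeriv_add_apply' (x := ((φ₁, φ₂) : ℝ × ℝ))
        ((hq'.comp contDiff_fst).of_le (coe_le_infty i)).contDiffAt
        ((hq'.comp contDiff_snd).neg.of_le (coe_le_infty i)).contDiffAt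
      have h10 : v = fun p : ℝ × ℝ => (q ∘ Prod.fst) p + (-(q ∘ Prod.snd)) p := by
        funext p
        simp [hvdef, sub_eq_add_neg]
      rw [h10]
      exact h9
    calc ‖iteratedFDeriv ℝ i v ((φ₁, φ₂) : ℝ × ℝ)‖
        ≤ ‖iteratedFDeriv ℝ i (q ∘ Prod.fst) ((φ₁, φ₂) : ℝ × ℝ)‖
          + ‖iteratedFDeriv ℝ i (-(q ∘ Prod.snd)) ((φ₁, φ₂) : ℝ × ℝ)‖ := by
          rw [hvsplit]; exact norm_add_le _ _
      _ ≤ B + B := by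
          apply add_le_add (hfst _)
          have : iteratedFDeriv ℝ i (-(q ∘ Prod.snd)) ((φ₁, φ₂) : ℝ × ℝ)
              = -iteratedFDeriv ℝ i (q ∘ Prod.snd) ((φ₁, φ₂) : ℝ × ℝ) :=
            iteratedFDeriv_neg_apply
          rw [this, norm_neg]
          exact hsnd _
      _ ≤ D := by rw [hDdef]; linarith
      _ ≤ D ^ i := le_self_pow₀ hD1 (by omega)
  have hfdb := norm_iteratedFDerivWithin_comp_le contDiffOn_Nmap hv.contDiffOn
    (coe_le_infty k) tset_open.uniqueDiffOn hUopen.uniqueDiffOn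
    (fun p hp => hp) hp0U hC hvb
  -- final chain
  have hwk : (‖v (φ₁, φ₂)‖⁻¹) ^ k ≤ ((c * |φ₁ - φ₂|)⁻¹) ^ k := by
    apply pow_le_pow_left₀ (inv_nonneg.mpr hwpos.le)
    exact inv_anti₀ (by positivity) hwlow
  calc ‖iteratedDeriv m (fun x => iteratedDeriv n (fun y => G (x, y)) φ₂) φ₁‖
      ≤ ‖iteratedFDeriv ℝ k G (φ₁, φ₂)‖ := hkey
    _ = ‖iteratedFDerivWithin ℝ k (Nmap ∘ v) U (φ₁, φ₂)‖ := by rw [hGFeq, hwithin]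
    _ ≤ (k.factorial : ℝ) * (A' * M ^ k * (‖v (φ₁, φ₂)‖⁻¹) ^ k) * D ^ k := hfdb
    _ ≤ (k.factorial : ℝ) * (A' * M ^ k * ((c * |φ₁ - φ₂|)⁻¹) ^ k) * D ^ k := by
        apply mul_le_mul_of_nonneg_right _ (by positivity)
        apply mul_le_mul_of_nonneg_left _ (by positivity)
        exact mul_le_mul_of_nonneg_left hwk (by positivity)
    _ = (k.factorial : ℝ) * A' * M ^ k * (c⁻¹) ^ k * D ^ k / |φ₁ - φ₂| ^ k := by
        rw [mul_inv, mul_pow, div_eq_mul_inv, ← inv_pow]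
        ring
end
end

section
/- Let F be as in the context. For every N ∈ ℕ there is a constant C_N such that for all w ∈ ℂ with Im w ≥ 0 and |w| ≥ 1, |F(w) − Σ_{j=0}^{N} c_j · w^{−j}| ≤ C_N · |w|^{−(N+1)}, where c_j = binom(−1/2, j) · Γ(j + 1/2) · (i/2)^j and binom(−1/2, j) is the generalized binomial coefficient. (In particular c₀ = Γ(1/2) = √π.) -/
/-!
Write `(1 + u)^α = ∑_{j<N} binom(α, j) u^j + R_N(α, u)`. Against the weight `e^{-s} s^{a-1}` the
polynomial part with `u = s z` integrates termwise to `∑_{j<N} binom(α, j) Γ(a + j) z^j` (here `a = 1/2`,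
`α = -1/2`, `z = i/(2w)`, so these are the `c_j w^{-j}`). When `α ≤ 0` and `Re u ≥ 0` the segment
`1 + tu`, `0 ≤ t ≤ 1`, lies in `Re ≥ 1`, where `|(1 + tu)^{α-1}| ≤ 1`; the integral form
`R_{N+1}(α, u) = α u ∫₀¹ R_N(α - 1, tu) dt` of the remainder then gives
`|R_N(α, u)| ≤ |binom(α, N)| |u|^N` by induction on `N`, and integrating this against the weight bounds
the error by `|binom(α, N)| Γ(a + N) |z|^N`.
-/

open MeasureTheory Finset

noncomputable section

def binomCoeff (α : ℂ) (j : ℕ) : ℂ :=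
  (∏ i ∈ range j, (α - i)) / j.factorial

lemma binomCoeff_zero (α : ℂ) : binomCoeff α 0 = 1 := by
  simp [binomCoeff]

lemma binomCoeff_succ (α : ℂ) (j : ℕ) :
    binomCoeff α (j + 1) = α * binomCoeff (α - 1) j / (j + 1) := by
  have hprod : ∏ i ∈ range (j + 1), (α - i) = (∏ i ∈ range j, (α - 1 - i)) * α := by
    rw [prod_range_succ']
    push_cast
    rw [sub_zero]
    exact congrArg (· * α) (prod_congr rfl fun i _ => by ring)
  have hj : (j : ℂ) + 1 ≠ 0 := Nat.cast_add_one_ne_zero j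
  rw [binomCoeff, binomCoeff, hprod, Nat.factorial_succ]
  push_cast
  field_simp

def binomRemainder (α : ℂ) (N : ℕ) (u : ℂ) : ℂ :=
  (1 + u) ^ α - ∑ j ∈ range N, binomCoeff α j * u ^ j

section Segment

variable {u : ℂ} (hu : 0 ≤ u.re)
include hu

lemma one_le_re_one_add_ofReal_mul {t : ℝ} (ht : 0 ≤ t) : 1 ≤ (1 + t * u).re := by
  simpa using mul_nonneg ht hu

lemma one_add_ofReal_mul_mem_slitPlane {t : ℝ} (ht : 0 ≤ t) : 1 + t * u ∈ Complex.slitPlane :=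
  Complex.mem_slitPlane_iff.mpr <| Or.inl <| one_pos.trans_le (one_le_re_one_add_ofReal_mul hu ht)

lemma continuousOn_one_add_ofReal_mul_cpow (α : ℂ) :
    ContinuousOn (fun t : ℝ => (1 + t * u) ^ α) (Set.Ici 0) :=
  (by fun_prop : Continuous fun t : ℝ => 1 + t * u).continuousOn.cpow_const
    fun _ ht => one_add_ofReal_mul_mem_slitPlane hu ht

lemma continuousOn_binomRemainder_ofReal_mul (α : ℂ) (N : ℕ) :
    ContinuousOn (fun t : ℝ => binomRemainder α N (t * u)) (Set.Ici 0) :=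
  (continuousOn_one_add_ofReal_mul_cpow hu α).sub (by fun_prop)

end Segment

lemma norm_cpow_ofReal_le_one {z : ℂ} (hz : 1 ≤ z.re) {β : ℝ} (hβ : β ≤ 0) :
    ‖z ^ (β : ℂ)‖ ≤ 1 := by
  rw [Complex.norm_cpow_real]
  exact Real.rpow_le_one_of_one_le_of_nonpos (hz.trans (Complex.re_le_norm z)) hβ

lemma one_add_cpow_eq_one_add_integral (α : ℂ) {u : ℂ} (hu : 0 ≤ u.re) :
    (1 + u) ^ α = 1 + α * u * ∫ t in (0 : ℝ)..1, (1 + t * u) ^ (α - 1) := by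
  have hderiv : ∀ t ∈ Set.uIcc (0 : ℝ) 1,
      HasDerivAt (fun t : ℝ => (1 + t * u) ^ α) (α * (1 + t * u) ^ (α - 1) * u) t := by
    intro t ht
    rw [Set.uIcc_of_le zero_le_one] at ht
    have hlin : HasDerivAt (fun t : ℝ => 1 + t * u) u t := by
      simpa using (Complex.ofRealCLM.hasDerivAt.mul_const u).const_add (1 : ℂ)
    exact (Complex.hasStrictDerivAt_cpow_const
      (one_add_ofReal_mul_mem_slitPlane hu ht.1)).hasDerivAt.comp t hlin
  have hcont : ContinuousOn (fun t : ℝ => α * (1 + t * u) ^ (α - 1) * u) (Set.uIcc 0 1) :=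
    (continuousOn_const.mul ((continuousOn_one_add_ofReal_mul_cpow hu _).mono
      (by rw [Set.uIcc_of_le zero_le_one]; exact Set.Icc_subset_Ici_self))).mul continuousOn_const
  have hftc := intervalIntegral.integral_eq_sub_of_hasDerivAt hderiv hcont.intervalIntegrable
  simp only [Complex.ofReal_one, Complex.ofReal_zero, one_mul, zero_mul, add_zero,
    Complex.one_cpow] at hftc
  rw [← intervalIntegral.integral_const_mul]
  simp only [mul_comm _ u, ← mul_assoc] at hftc ⊢
  linear_combination -hftc

lemma integral_ofReal_mul_pow (u : ℂ) (j : ℕ) :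
    ∫ t in (0 : ℝ)..1, ((t : ℂ) * u) ^ j = u ^ j / (j + 1) := by
  simp only [mul_pow, intervalIntegral.integral_mul_const, ← Complex.ofReal_pow,
    intervalIntegral.integral_ofReal, integral_pow]
  push_cast
  ring

lemma binomRemainder_succ (α : ℂ) {u : ℂ} (hu : 0 ≤ u.re) (N : ℕ) :
    binomRemainder α (N + 1) u =
      α * u * ∫ t in (0 : ℝ)..1, binomRemainder (α - 1) N (t * u) := by
  have hint_poly : ∀ j ∈ range N, IntervalIntegrable
      (fun t : ℝ => binomCoeff (α - 1) j * (t * u) ^ j) volume 0 1 :=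
    fun j _ => (by fun_prop : Continuous _).intervalIntegrable 0 1
  have hint_rem :
      IntervalIntegrable (fun t : ℝ => binomRemainder (α - 1) N (t * u)) volume 0 1 :=
    ((continuousOn_binomRemainder_ofReal_mul hu _ N).mono
      (by rw [Set.uIcc_of_le zero_le_one]; exact Set.Icc_subset_Ici_self)).intervalIntegrable
  have hsplit : ∫ t in (0 : ℝ)..1, (1 + t * u) ^ (α - 1)
      = (∫ t in (0 : ℝ)..1, binomRemainder (α - 1) N (t * u))
        + ∑ j ∈ range N, binomCoeff (α - 1) j * (u ^ j / (j + 1)) := by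
    have hpoint : (fun t : ℝ => (1 + t * u) ^ (α - 1)) = fun t : ℝ =>
        binomRemainder (α - 1) N (t * u)
          + ∑ j ∈ range N, binomCoeff (α - 1) j * (t * u) ^ j :=
      funext fun t => by simp [binomRemainder]
    rw [hpoint, intervalIntegral.integral_add hint_rem
        ((by fun_prop : Continuous _).intervalIntegrable 0 1),
      intervalIntegral.integral_finsetSum hint_poly]
    simp only [intervalIntegral.integral_const_mul, integral_ofReal_mul_pow]
  have hsum : α * u * ∑ j ∈ range N, binomCoeff (α - 1) j * (u ^ j / (j + 1))
      = ∑ j ∈ range N, binomCoeff α (j + 1) * u ^ (j + 1) := by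
    rw [mul_sum]
    exact sum_congr rfl fun j _ => by rw [binomCoeff_succ]; ring
  rw [binomRemainder, one_add_cpow_eq_one_add_integral α hu, hsplit, sum_range_succ', mul_add,
    hsum, binomCoeff_zero]
  ring

theorem norm_binomRemainder_le (N : ℕ) {α : ℝ} (hα : α ≤ 0) {u : ℂ} (hu : 0 ≤ u.re) :
    ‖binomRemainder α N u‖ ≤ ‖binomCoeff α N‖ * ‖u‖ ^ N := by
  induction N generalizing α u with
  | zero =>
    simpa [binomRemainder, binomCoeff_zero] using
      norm_cpow_ofReal_le_one (by simpa using hu : 1 ≤ (1 + u).re) hα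
  | succ N ih =>
    have hpointwise : ∀ᵐ t, t ∈ Set.Ioc (0 : ℝ) 1 →
        ‖binomRemainder (α - 1) N (t * u)‖
          ≤ ‖binomCoeff (α - 1) N‖ * ‖u‖ ^ N * t ^ N := by
      refine ae_of_all _ fun t ht => ?_
      have h := ih (α := α - 1) (u := t * u) (by linarith) (by simpa using mul_nonneg ht.1.le hu)
      push_cast at h
      rwa [norm_mul, Complex.norm_real, Real.norm_of_nonneg ht.1.le, mul_pow,
        mul_comm (t ^ N), ← mul_assoc] at h
    have hintegral : ‖∫ t in (0 : ℝ)..1, binomRemainder (α - 1) N (t * u)‖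
        ≤ ‖binomCoeff (α - 1) N‖ * ‖u‖ ^ N / (N + 1) :=
      calc _ ≤ ∫ t in (0 : ℝ)..1, ‖binomCoeff (α - 1) N‖ * ‖u‖ ^ N * t ^ N :=
            intervalIntegral.norm_integral_le_of_norm_le zero_le_one hpointwise
              ((by fun_prop : Continuous _).intervalIntegrable 0 1)
        _ = _ := by simp [integral_pow, div_eq_mul_inv]
    rw [binomRemainder_succ _ hu, binomCoeff_succ, norm_mul, norm_mul, norm_div, norm_mul]
    calc _ ≤ ‖(α : ℂ)‖ * ‖u‖ * (‖binomCoeff (α - 1) N‖ * ‖u‖ ^ N / (N + 1)) := by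
          gcongr
      _ = _ := by
        rw [show (N : ℂ) + 1 = ((N + 1 : ℕ) : ℂ) by push_cast; ring, Complex.norm_natCast]
        push_cast
        ring

def gammaWeight (a s : ℝ) : ℝ := Real.exp (-s) * s ^ (a - 1)

section GammaWeight

variable {a : ℝ}

lemma gammaWeight_nonneg {s : ℝ} (hs : 0 ≤ s) : 0 ≤ gammaWeight a s :=
  mul_nonneg (Real.exp_nonneg _) (Real.rpow_nonneg hs _)

lemma gammaWeight_mul_pow {s : ℝ} (hs : 0 < s) (j : ℕ) :
    gammaWeight a s * s ^ j = gammaWeight (a + j) s := by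
  rw [gammaWeight, gammaWeight, mul_assoc, ← Real.rpow_natCast, ← Real.rpow_add hs]
  ring_nf

lemma continuousOn_gammaWeight : ContinuousOn (gammaWeight a) (Set.Ioi 0) :=
  (Real.continuous_exp.comp continuous_neg).continuousOn.mul
    (continuousOn_id.rpow_const fun _ hs => Or.inl (ne_of_gt hs))

lemma integrableOn_gammaWeight (ha : 0 < a) : IntegrableOn (gammaWeight a) (Set.Ioi 0) :=
  Real.GammaIntegral_convergent ha

lemma integral_gammaWeight (ha : 0 < a) : ∫ s in Set.Ioi 0, gammaWeight a s = Real.Gamma a :=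
  (Real.Gamma_eq_integral ha).symm

lemma ofReal_gammaWeight_mul_pow {s : ℝ} (hs : 0 < s) (z : ℂ) (j : ℕ) :
    (gammaWeight a s : ℂ) * (s * z) ^ j = z ^ j * (gammaWeight (a + j) s : ℂ) := by
  rw [← gammaWeight_mul_pow hs j]
  push_cast
  ring

lemma integrableOn_gammaWeight_mul_pow (ha : 0 < a) (z : ℂ) (j : ℕ) :
    IntegrableOn (fun s : ℝ => (gammaWeight a s : ℂ) * (s * z) ^ j) (Set.Ioi 0) :=
  IntegrableOn.congr_fun ((integrableOn_gammaWeight (by positivity)).ofReal.const_mul (z ^ j))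
    (fun _ hs => (ofReal_gammaWeight_mul_pow hs z j).symm) measurableSet_Ioi

lemma integral_gammaWeight_mul_pow (ha : 0 < a) (z : ℂ) (j : ℕ) :
    ∫ s in Set.Ioi 0, (gammaWeight a s : ℂ) * (s * z) ^ j = Real.Gamma (a + j) * z ^ j := by
  rw [setIntegral_congr_fun measurableSet_Ioi fun _ hs => ofReal_gammaWeight_mul_pow hs z j,
    integral_const_mul, integral_complex_ofReal, integral_gammaWeight (by positivity), mul_comm]

lemma integrableOn_gammaWeight_mul_one_add_cpow (ha : 0 < a) {α : ℝ} (hα : α ≤ 0) {z : ℂ}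
    (hz : 0 ≤ z.re) :
    IntegrableOn (fun s : ℝ => (gammaWeight a s : ℂ) * (1 + s * z) ^ (α : ℂ))
      (Set.Ioi 0) := by
  refine Integrable.mono' (integrableOn_gammaWeight ha)
    ((Complex.continuous_ofReal.comp_continuousOn continuousOn_gammaWeight).mul
      ((continuousOn_one_add_ofReal_mul_cpow hz _).mono Set.Ioi_subset_Ici_self)
      |>.aestronglyMeasurable measurableSet_Ioi) ?_
  filter_upwards [ae_restrict_mem measurableSet_Ioi] with s hs
  rw [norm_mul, Complex.norm_real, Real.norm_of_nonneg (gammaWeight_nonneg (le_of_lt hs))]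
  exact mul_le_of_le_one_right (gammaWeight_nonneg (le_of_lt hs))
    (norm_cpow_ofReal_le_one (one_le_re_one_add_ofReal_mul hz (le_of_lt hs)) hα)

theorem norm_integral_gammaWeight_mul_one_add_cpow_sub_sum_le (ha : 0 < a) {α : ℝ}
    (hα : α ≤ 0) {z : ℂ} (hz : 0 ≤ z.re) (N : ℕ) :
    ‖(∫ s in Set.Ioi 0, (gammaWeight a s : ℂ) * (1 + s * z) ^ (α : ℂ))
        - ∑ j ∈ range N, binomCoeff α j * Real.Gamma (a + j) * z ^ j‖
      ≤ ‖binomCoeff α N‖ * Real.Gamma (a + N) * ‖z‖ ^ N := by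
  have hterms : ∀ j ∈ range N, IntegrableOn
      (fun s : ℝ => binomCoeff α j * ((gammaWeight a s : ℂ) * (s * z) ^ j)) (Set.Ioi 0) :=
    fun j _ => (integrableOn_gammaWeight_mul_pow ha z j).const_mul _
  have hdiff : (∫ s in Set.Ioi 0, (gammaWeight a s : ℂ) * (1 + s * z) ^ (α : ℂ))
        - ∑ j ∈ range N, binomCoeff α j * Real.Gamma (a + j) * z ^ j
      = ∫ s in Set.Ioi 0, (gammaWeight a s : ℂ) * binomRemainder α N (s * z) := by
    have hsum : ∑ j ∈ range N, binomCoeff α j * Real.Gamma (a + j) * z ^ j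
        = ∫ s in Set.Ioi 0, ∑ j ∈ range N,
            binomCoeff α j * ((gammaWeight a s : ℂ) * (s * z) ^ j) := by
      rw [integral_finsetSum _ hterms]
      exact sum_congr rfl fun j _ => by
        rw [integral_const_mul, integral_gammaWeight_mul_pow ha]
        ring
    rw [hsum, ← integral_sub (integrableOn_gammaWeight_mul_one_add_cpow ha hα hz)
      (integrable_finsetSum _ hterms)]
    congr 1
    funext s
    simp only [binomRemainder, mul_sub, mul_sum]
    congr 1
    exact sum_congr rfl fun j _ => by ring
  have hbound : ∀ᵐ s ∂(volume.restrict (Set.Ioi 0)),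
      ‖(gammaWeight a s : ℂ) * binomRemainder α N (s * z)‖
        ≤ ‖binomCoeff α N‖ * ‖z‖ ^ N * gammaWeight (a + N) s := by
    filter_upwards [ae_restrict_mem measurableSet_Ioi] with s hs
    have hs' : (0 : ℝ) < s := hs
    have hre : 0 ≤ ((s : ℂ) * z).re := by simpa using mul_nonneg hs'.le hz
    rw [norm_mul, Complex.norm_real, Real.norm_of_nonneg (gammaWeight_nonneg hs'.le),
      ← gammaWeight_mul_pow hs' N]
    calc _ ≤ gammaWeight a s * (‖binomCoeff α N‖ * ‖(s : ℂ) * z‖ ^ N) :=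
          mul_le_mul_of_nonneg_left (norm_binomRemainder_le N hα hre) (gammaWeight_nonneg hs'.le)
      _ = _ := by
        rw [norm_mul, Complex.norm_real, Real.norm_of_nonneg hs'.le]
        ring
  rw [hdiff]
  calc _ ≤ ∫ s in Set.Ioi 0, ‖binomCoeff α N‖ * ‖z‖ ^ N * gammaWeight (a + N) s :=
        norm_integral_le_of_norm_le ((integrableOn_gammaWeight (by positivity)).const_mul _) hbound
    _ = _ := by
      rw [integral_const_mul, integral_gammaWeight (by positivity)]
      ring

end GammaWeight

lemma re_I_div_two_mul_nonneg {w : ℂ} (hw : 0 ≤ w.im) : 0 ≤ (Complex.I / (2 * w)).re := by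
  rw [Complex.div_re]
  simp only [Complex.I_re, Complex.mul_re, Complex.re_ofNat, Complex.im_ofNat, zero_mul,
    sub_zero, map_mul, Complex.normSq_ofNat, zero_div, Complex.I_im, Complex.mul_im, add_zero,
    one_mul, zero_add]
  exact div_nonneg (by linarith) (mul_nonneg (by norm_num) (Complex.normSq_nonneg w))

/-- Complete asymptotic expansion of the Hankel amplitude
`F(w) = ∫₀^∞ e^{-s} s^{-1/2} (1 + is/(2w))^{-1/2} ds` in powers of `w⁻¹`,
uniformly in the closed upper half plane for `|w| ≥ 1`, with coefficients
`c_j = binom(-1/2, j) Γ(j + 1/2) (i/2)^j`. -/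
theorem stmt_6
    (F : ℂ → ℂ)
    (hF : ∀ w : ℂ, F w = ∫ s in Set.Ioi (0:ℝ),
        (Real.exp (-s) : ℂ) * ((s ^ (-(1/2) : ℝ) : ℝ) : ℂ) *
          (1 + Complex.I * (s : ℂ) / (2 * w)) ^ (-(1/2) : ℂ))
    (c : ℕ → ℂ)
    (hc : ∀ j : ℕ, c j =
        ((∏ i ∈ Finset.range j, ((-(1/2) : ℂ) - (i : ℂ))) / (Nat.factorial j : ℂ)) *
          Complex.Gamma ((j : ℂ) + 1/2) * (Complex.I / 2) ^ j) :
    ∀ N : ℕ, ∃ C : ℝ, ∀ w : ℂ, 0 ≤ w.im → 1 ≤ ‖w‖ →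
      ‖F w - ∑ j ∈ Finset.range (N + 1), c j * w ^ (-(j : ℤ))‖
        ≤ C * ‖w‖ ^ (-(N : ℤ) - 1) := by
  intro N
  refine ⟨‖binomCoeff (-(1/2) : ℝ) (N + 1)‖ * Real.Gamma (1/2 + (N + 1 : ℕ)) / 2 ^ (N + 1),
    fun w hw_im hw_norm => ?_⟩
  have hw : w ≠ 0 := norm_pos_iff.mp (one_pos.trans_le hw_norm)
  set z := Complex.I / (2 * w) with hz_def
  have hz : 0 ≤ z.re := re_I_div_two_mul_nonneg hw_im
  have hF' : F w =
      ∫ s in Set.Ioi 0, (gammaWeight (1/2) s : ℂ) * (1 + s * z) ^ ((-(1/2) : ℝ) : ℂ) := by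
    rw [hF]
    refine setIntegral_congr_fun measurableSet_Ioi fun s _ => ?_
    simp only [gammaWeight, hz_def]
    push_cast
    ring_nf
  have hc' : ∀ j : ℕ,
      c j * w ^ (-(j : ℤ)) = binomCoeff (-(1/2) : ℝ) j * Real.Gamma (1/2 + j) * z ^ j := by
    intro j
    rw [hc, hz_def, binomCoeff, zpow_neg, zpow_natCast,
      show (j : ℂ) + 1 / 2 = ((1 / 2 + j : ℝ) : ℂ) by push_cast; ring, Complex.Gamma_ofReal]
    push_cast
    simp only [div_pow, mul_pow]
    field_simp
  have hnorm_z : ‖z‖ ^ (N + 1) = ‖w‖ ^ (-(N : ℤ) - 1) / 2 ^ (N + 1) := by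
    rw [hz_def, norm_div, Complex.norm_I, norm_mul, Complex.norm_two, div_pow, mul_pow,
      show -(N : ℤ) - 1 = -((N + 1 : ℕ) : ℤ) by push_cast; ring, zpow_neg, zpow_natCast]
    ring
  simp only [hF', hc']
  calc _ ≤ _ := norm_integral_gammaWeight_mul_one_add_cpow_sub_sum_le (by norm_num) (by norm_num)
        hz (N + 1)
    _ = _ := by rw [hnorm_z]; ring
end
end
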